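/- arXiv:2506.11573 — 6 statements merged into one kernel-verified Lean document; each statement's English description precedes it below -/
import Mathlib

section
/- Let L ∈ ℕ with L ≥ 1 and let μ be a nonnegative finite measure on (0,L] with μ((0,L]) > 0 such that μ is not a point mass on (0,L], i.e., there is no x₀ ∈ (0,L] with μ({x₀}) = μ((0,L]). Then there exists M ∈ ℕ such that for every n ≥ M there exist l₁, l₂ ∈ ℕ with l₂ ≥ l₁ + 2, μ((L·l₁/2ⁿ, L·(l₁+1)/2ⁿ]) > 0 and μ((L·l₂/2ⁿ, L·(l₂+1)/2ⁿ]) > 0. -/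
open MeasureTheory Set

/-- Covering lemma: a set of positive measure inside `(0,L]` meets some dyadic
interval of level `n` which itself has positive measure. -/
lemma dyadic_cover (L n : ℕ) (hL : 1 ≤ L) (μ : Measure ℝ) (s : Set ℝ)
    (hs : s ⊆ Ioc (0:ℝ) (L:ℝ)) (hspos : μ s ≠ 0) :
    ∃ l : ℕ, ∃ t ∈ s, (L:ℝ) * (l:ℝ) / 2 ^ n < t ∧ t ≤ (L:ℝ) * ((l:ℝ) + 1) / 2 ^ n ∧
      0 < μ (Ioc ((L:ℝ) * (l:ℝ) / 2 ^ n) ((L:ℝ) * ((l:ℝ) + 1) / 2 ^ n)) := by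
  have hL0 : (0:ℝ) < L := by exact_mod_cast hL
  have h2n : (0:ℝ) < 2 ^ n := by positivity
  set I : ℕ → Set ℝ := fun l => Ioc ((L:ℝ) * (l:ℝ) / 2 ^ n) ((L:ℝ) * ((l:ℝ) + 1) / 2 ^ n)
    with hI
  have hcover : s ⊆ ⋃ l ∈ Finset.range (2 ^ n), I l := by
    intro t ht
    obtain ⟨ht0, htL⟩ := hs ht
    set r : ℝ := t * 2 ^ n / L with hr
    have hr0 : 0 < r := by positivity
    have hrle : r ≤ (2 ^ n : ℕ) := by
      push_cast
      rw [hr, div_le_iff₀ hL0]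
      nlinarith
    have hc1 : 1 ≤ ⌈r⌉₊ := Nat.ceil_pos.mpr hr0
    have hlcast : ((⌈r⌉₊ - 1 : ℕ) : ℝ) = (⌈r⌉₊ : ℝ) - 1 := by
      push_cast [Nat.cast_sub hc1]; ring
    have hlr : ((⌈r⌉₊ - 1 : ℕ) : ℝ) < r := by
      rw [hlcast]
      have := Nat.ceil_lt_add_one hr0.le
      linarith
    have hrl : r ≤ ((⌈r⌉₊ - 1 : ℕ) : ℝ) + 1 := by
      rw [hlcast]
      have := Nat.le_ceil r
      linarith
    have hrL : r * L = t * 2 ^ n := by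
      rw [hr, div_mul_cancel₀ _ hL0.ne']
    refine mem_iUnion₂.mpr ⟨⌈r⌉₊ - 1, ?_, ?_, ?_⟩
    · have h2 : ⌈r⌉₊ ≤ 2 ^ n := Nat.ceil_le.mpr hrle
      simp only [Finset.mem_range]
      omega
    · rw [div_lt_iff₀ h2n]
      nlinarith
    · rw [le_div_iff₀ h2n]
      nlinarith
  have hex : ∃ l ∈ Finset.range (2 ^ n), μ (I l ∩ s) ≠ 0 := by
    by_contra hcon
    push_neg at hcon
    apply hspos
    have h1 : μ s ≤ ∑ l ∈ Finset.range (2 ^ n), μ (I l ∩ s) := by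
      refine le_trans (measure_mono ?_) (measure_biUnion_finset_le _ _)
      intro t ht
      obtain ⟨l, hl1, hl2⟩ := mem_iUnion₂.mp (hcover ht)
      exact mem_iUnion₂.mpr ⟨l, hl1, hl2, ht⟩
    rw [Finset.sum_eq_zero hcon] at h1
    exact le_antisymm h1 zero_le
  obtain ⟨l, _, hlne⟩ := hex
  obtain ⟨t, htI, hts⟩ := nonempty_of_measure_ne_zero hlne
  refine ⟨l, t, hts, htI.1, htI.2, ?_⟩
  calc (0:ENNReal) < μ (I l ∩ s) := pos_iff_ne_zero.mpr hlne
    _ ≤ μ (I l) := measure_mono inter_subset_left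

/-- If a nonnegative finite measure on `(0,L]` with positive total
mass is not a point mass, then for all sufficiently fine dyadic partitions of `(0,L]`
two subintervals whose indices differ by at least `2` carry positive mass. -/
theorem dyadic_two_charged_intervals
    (L : ℕ) (hL : 1 ≤ L) (μ : Measure ℝ)
    (hsupp : μ ((Ioc (0 : ℝ) (L : ℝ))ᶜ) = 0)
    (hfin : μ (Ioc (0 : ℝ) (L : ℝ)) ≠ ⊤)
    (hpos : 0 < μ (Ioc (0 : ℝ) (L : ℝ)))
    (hnotpoint : ¬ ∃ x₀ ∈ Ioc (0 : ℝ) (L : ℝ), μ {x₀} = μ (Ioc (0 : ℝ) (L : ℝ))) :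
    ∃ M : ℕ, ∀ n : ℕ, M ≤ n → ∃ l₁ l₂ : ℕ, l₁ + 2 ≤ l₂ ∧
      0 < μ (Ioc ((L : ℝ) * (l₁ : ℝ) / 2 ^ n) ((L : ℝ) * ((l₁ : ℝ) + 1) / 2 ^ n)) ∧
      0 < μ (Ioc ((L : ℝ) * (l₂ : ℝ) / 2 ^ n) ((L : ℝ) * ((l₂ : ℝ) + 1) / 2 ^ n)) := by
  have hL0 : (0:ℝ) < L := by exact_mod_cast hL
  -- left extremity
  set A : Set ℝ := {c | c ≤ L ∧ μ (Ioc (0:ℝ) c) = 0} with hA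
  have hA0 : (0:ℝ) ∈ A := ⟨hL0.le, by simp⟩
  have hAbdd : BddAbove A := ⟨L, fun c hc => hc.1⟩
  set a : ℝ := sSup A with ha
  have ha0 : 0 ≤ a := le_csSup hAbdd hA0
  have haL : a ≤ L := csSup_le ⟨0, hA0⟩ (fun c hc => hc.1)
  have hleft : ∀ c, c < a → μ (Ioc (0:ℝ) c) = 0 := by
    intro c hc
    obtain ⟨d, hd, hcd⟩ := exists_lt_of_lt_csSup ⟨0, hA0⟩ hc
    exact measure_mono_null (Ioc_subset_Ioc_right hcd.le) hd.2
  -- right extremity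
  set B : Set ℝ := {c | 0 ≤ c ∧ μ (Ioc c (L:ℝ)) = 0} with hB
  have hBL : (L:ℝ) ∈ B := ⟨hL0.le, by simp⟩
  have hBbdd : BddBelow B := ⟨0, fun c hc => hc.1⟩
  set b : ℝ := sInf B with hb
  have hb0 : 0 ≤ b := le_csInf ⟨L, hBL⟩ (fun c hc => hc.1)
  have hbL : b ≤ L := csInf_le hBbdd hBL
  have hright : ∀ c, b < c → μ (Ioc c (L:ℝ)) = 0 := by
    intro c hc
    obtain ⟨d, hd, hdc⟩ := exists_lt_of_csInf_lt ⟨(L:ℝ), hBL⟩ (hb ▸ hc)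
    exact measure_mono_null (Ioc_subset_Ioc_left hdc.le) hd.2
  -- the mass below a is zero
  have hIooLeft : μ (Ioo (0:ℝ) a) = 0 := by
    have hsub : Ioo (0:ℝ) a ⊆ ⋃ q : ℚ,
        (if (q:ℝ) < a then Ioc (0:ℝ) (q:ℝ) else ∅) := by
      intro x hx
      obtain ⟨q, hq1, hq2⟩ := exists_rat_btwn hx.2
      refine mem_iUnion.mpr ⟨q, ?_⟩
      rw [if_pos hq2]
      exact ⟨hx.1, hq1.le⟩
    refine measure_mono_null hsub (measure_iUnion_null fun q => ?_)
    split_ifs with h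
    · exact hleft _ h
    · simp
  -- the mass above b is zero
  have hIocRight : μ (Ioc b (L:ℝ)) = 0 := by
    have hsub : Ioc b (L:ℝ) ⊆ ⋃ q : ℚ,
        (if b < (q:ℝ) then Ioc (q:ℝ) (L:ℝ) else ∅) := by
      intro x hx
      obtain ⟨q, hq1, hq2⟩ := exists_rat_btwn hx.1
      refine mem_iUnion.mpr ⟨q, ?_⟩
      rw [if_pos hq1]
      exact ⟨hq2, hx.2⟩
    refine measure_mono_null hsub (measure_iUnion_null fun q => ?_)
    split_ifs with h
    · exact hright _ h
    · simp
  rcases lt_trichotomy a b with hab | hab | hab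
  · -- main case : a < b
    set ε : ℝ := (b - a) / 4 with hε
    have hε0 : 0 < ε := by rw [hε]; linarith
    obtain ⟨M, hM⟩ := pow_unbounded_of_one_lt (3 * (L:ℝ) / (2 * ε)) one_lt_two
    refine ⟨M, fun n hn => ?_⟩
    have h2M : (2:ℝ) ^ M ≤ 2 ^ n := by
      exact pow_le_pow_right₀ one_le_two hn
    have h2n : (0:ℝ) < 2 ^ n := by positivity
    have hδ : 3 * ((L:ℝ) / 2 ^ n) < 2 * ε := by
      rw [div_lt_iff₀ (by positivity : (0:ℝ) < 2 * ε)] at hM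
      have h1 : 3 * (L:ℝ) < 2 * ε * 2 ^ n := by nlinarith
      rw [show 3 * ((L:ℝ) / 2 ^ n) = 3 * (L:ℝ) / 2 ^ n by ring, div_lt_iff₀ h2n]
      linarith
    -- left charged set
    have haεL : a + ε ≤ (L:ℝ) := by linarith
    have hleftpos : μ (Ioc (a - ε) (a + ε) ∩ Ioc (0:ℝ) (L:ℝ)) ≠ 0 := by
      have h1 : μ (Ioc (0:ℝ) (a + ε)) ≠ 0 := by
        intro h
        have : a + ε ∈ A := ⟨haεL, h⟩
        have := le_csSup hAbdd this
        linarith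
      have h2 : μ (Ioc (0:ℝ) (a - ε)) = 0 := hleft _ (by linarith)
      intro h
      apply h1
      have hsub : Ioc (0:ℝ) (a + ε) ⊆
          (Ioc (a - ε) (a + ε) ∩ Ioc (0:ℝ) (L:ℝ)) ∪ Ioc (0:ℝ) (a - ε) ∪
            (Ioc (0:ℝ) (L:ℝ))ᶜ := by
        intro x hx
        by_cases hxL : x ∈ Ioc (0:ℝ) (L:ℝ)
        · by_cases hxa : a - ε < x
          · exact Or.inl (Or.inl ⟨⟨hxa, hx.2⟩, hxL⟩)
          · exact Or.inl (Or.inr ⟨hx.1, not_lt.mp hxa⟩)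
        · exact Or.inr hxL
      have hle : μ (Ioc (0:ℝ) (a + ε)) ≤ 0 :=
        calc μ (Ioc (0:ℝ) (a + ε))
            ≤ μ (Ioc (a - ε) (a + ε) ∩ Ioc (0:ℝ) (L:ℝ)) + μ (Ioc (0:ℝ) (a - ε)) +
              μ ((Ioc (0:ℝ) (L:ℝ))ᶜ) :=
              le_trans (measure_mono hsub)
                (le_trans (measure_union_le _ _) (by gcongr; exact measure_union_le _ _))
          _ = 0 := by rw [h, h2, hsupp]; simp
      exact le_antisymm hle zero_le
    -- right charged set
    have hrightpos : μ (Ioc (b - ε) (L:ℝ)) ≠ 0 := by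
      intro h
      have : b - ε ∈ B := ⟨by linarith, h⟩
      have := csInf_le hBbdd this
      linarith
    have hs2sub : Ioc (b - ε) (L:ℝ) ⊆ Ioc (0:ℝ) (L:ℝ) :=
      Ioc_subset_Ioc_left (by linarith)
    -- apply covering lemma
    obtain ⟨l₁, t₁, ht₁s, ht₁l, ht₁r, hμ₁⟩ :=
      dyadic_cover L n hL μ _ inter_subset_right hleftpos
    obtain ⟨l₂, t₂, ht₂s, ht₂l, ht₂r, hμ₂⟩ :=
      dyadic_cover L n hL μ _ hs2sub hrightpos
    refine ⟨l₁, l₂, ?_, hμ₁, hμ₂⟩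
    have ht₁ : t₁ ≤ a + ε := ht₁s.1.2
    have ht₂ : b - ε < t₂ := ht₂s.1
    set d : ℝ := (L:ℝ) / 2 ^ n with hd
    have hd0 : 0 < d := by positivity
    have e₁ : (L:ℝ) * (l₁:ℝ) / 2 ^ n = (l₁:ℝ) * d := by rw [hd]; ring
    have e₂ : (L:ℝ) * ((l₂:ℝ) + 1) / 2 ^ n = ((l₂:ℝ) + 1) * d := by rw [hd]; ring
    rw [e₁] at ht₁l
    rw [e₂] at ht₂r
    have hbae : b = a + 4 * ε := by rw [hε]; ring
    have key : ((l₁:ℝ) + 3) * d < ((l₂:ℝ) + 1) * d := by nlinarith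
    have key2 : (l₁:ℝ) + 3 < (l₂:ℝ) + 1 := lt_of_mul_lt_mul_right key hd0.le
    have : l₁ + 3 < l₂ + 1 := by exact_mod_cast key2
    omega
  · -- a = b : point mass, contradiction
    exfalso
    have hnull : μ (Ioc (0:ℝ) (L:ℝ) \ {a}) = 0 := by
      refine measure_mono_null ?_ (measure_union_null hIooLeft hIocRight)
      intro x ⟨hx1, hx2⟩
      rcases lt_trichotomy x a with h | h | h
      · exact Or.inl ⟨hx1.1, h⟩
      · exact absurd h hx2
      · exact Or.inr ⟨by rw [hab] at h; exact h, hx1.2⟩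
    have h1 : μ (Ioc (0:ℝ) (L:ℝ)) ≤ μ {a} := by
      calc μ (Ioc (0:ℝ) (L:ℝ)) ≤ μ ({a} ∪ Ioc (0:ℝ) (L:ℝ) \ {a}) :=
            measure_mono (fun x hx => by
              by_cases h : x = a
              · exact Or.inl h
              · exact Or.inr ⟨hx, h⟩)
        _ ≤ μ {a} + μ (Ioc (0:ℝ) (L:ℝ) \ {a}) := measure_union_le _ _
        _ = μ {a} := by rw [hnull, add_zero]
    by_cases haIoc : a ∈ Ioc (0:ℝ) (L:ℝ)
    · exact hnotpoint ⟨a, haIoc,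
        le_antisymm (measure_mono (singleton_subset_iff.mpr haIoc)) h1⟩
    · have : μ {a} = 0 :=
        measure_mono_null (singleton_subset_iff.mpr haIoc) hsupp
      rw [this] at h1
      exact absurd (le_antisymm h1 zero_le) hpos.ne'
  · -- b < a : total mass zero, contradiction
    exfalso
    have hnull : μ (Ioc (0:ℝ) (L:ℝ)) = 0 := by
      refine measure_mono_null ?_ (measure_union_null hIooLeft hIocRight)
      intro x ⟨hx1, hx2⟩
      by_cases h : x < a
      · exact Or.inl ⟨hx1, h⟩
      · exact Or.inr ⟨lt_of_lt_of_le hab (not_lt.mp h), hx2⟩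
    rw [hnull] at hpos
    exact lt_irrefl _ hpos
end

section
/- Let L > 0 and let μ be a nonnegative finite measure on (0,L] with μ((0,L]) > 0. Suppose that for every integer n ≥ 2 there exists j_n ∈ ℕ with j_n + 2 ≤ 2ⁿ such that μ((L·j_n/2ⁿ, L·(j_n+2)/2ⁿ]) = μ((0,L]). Then there exists x₀ ∈ (0,L] such that μ({x₀}) = μ((0,L]), i.e., μ is the point mass μ((0,L])·δ_{x₀} on (0,L]. -/
open MeasureTheory Set Filter Topology

/-!
Every dyadic interval of the hypothesis carries the full mass, so almost every point lies in all
of them at once. These intervals have diameters `2L / 2ⁿ → 0`, so any two such points coincide: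
the measure is concentrated at a single point `x₀`, which then carries the whole mass.
-/

theorem MeasureTheory.exists_ae_eq_of_ae_mem_of_tendsto_ediam {X : Type*} [EMetricSpace X]
    [MeasurableSpace X] {μ : Measure X} (hμ : μ ≠ 0) {s : ℕ → Set X}
    (hs : ∀ n, ∀ᵐ x ∂μ, x ∈ s n)
    (hdiam : Tendsto (fun n ↦ Metric.ediam (s n)) atTop (𝓝 0)) :
    ∃ x₀, ∀ᵐ x ∂μ, x = x₀ := by
  have : (ae μ).NeBot := ae_neBot.2 hμ
  have hall : ∀ᵐ x ∂μ, ∀ n, x ∈ s n := ae_all_iff.2 hs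
  obtain ⟨x₀, hx₀⟩ := hall.exists
  exact ⟨x₀, hall.mono fun x hx ↦ edist_le_zero.1 <|
    ge_of_tendsto' hdiam fun n ↦ Metric.edist_le_ediam_of_mem (hx n) (hx₀ n)⟩

theorem Real.ediam_Ioc_mul_div_two_pow (L a : ℝ) (n : ℕ) :
    Metric.ediam (Ioc (L * a / 2 ^ n) (L * (a + 2) / 2 ^ n)) = ENNReal.ofReal (2 * L / 2 ^ n) := by
  rw [Real.ediam_Ioc]
  ring_nf

theorem tendsto_ofReal_div_two_pow (c : ℝ) :
    Tendsto (fun n : ℕ ↦ ENNReal.ofReal (c / 2 ^ n)) atTop (𝓝 0) := by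
  rw [← ENNReal.ofReal_zero]
  exact ENNReal.tendsto_ofReal <|
    Tendsto.const_div_atTop (tendsto_pow_atTop_atTop_of_one_lt one_lt_two) c

theorem concentration_implies_point_mass_general
    (L : ℝ) (μ : Measure ℝ)
    (hsupp : μ ((Ioc (0 : ℝ) L)ᶜ) = 0)
    (hfin : μ (Ioc (0 : ℝ) L) ≠ ⊤)
    (hpos : 0 < μ (Ioc (0 : ℝ) L))
    (hyp : ∀ n : ℕ, 2 ≤ n → ∃ j : ℕ, j + 2 ≤ 2 ^ n ∧
      μ (Ioc (L * (j : ℝ) / 2 ^ n) (L * ((j : ℝ) + 2) / 2 ^ n)) = μ (Ioc (0 : ℝ) L)) :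
    ∃ x₀ ∈ Ioc (0 : ℝ) L, μ {x₀} = μ (Ioc (0 : ℝ) L) ∧
      μ.restrict (Ioc (0 : ℝ) L) = μ (Ioc (0 : ℝ) L) • Measure.dirac x₀ := by
  set S := Ioc (0 : ℝ) L
  have hS : ∀ᵐ x ∂μ, x ∈ S := ae_iff.2 hsupp
  have hSuniv : μ S = μ univ := measure_congr (eventuallyEq_univ.2 hS)
  have : IsFiniteMeasure μ := ⟨hSuniv ▸ hfin.lt_top⟩
  have hμ : μ ≠ 0 := fun h ↦ hpos.ne' (by simp [h])
  have : (ae μ).NeBot := ae_neBot.2 hμ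
  choose j _ hμj using fun n : ℕ ↦ hyp (n + 2) (by omega)
  obtain ⟨x₀, hx₀⟩ := exists_ae_eq_of_ae_mem_of_tendsto_ediam hμ
    (fun n ↦ (ae_mem_iff_measure_eq measurableSet_Ioc.nullMeasurableSet).2 ((hμj n).trans hSuniv))
    (by simpa only [Real.ediam_Ioc_mul_div_two_pow, Function.comp_def] using
      (tendsto_ofReal_div_two_pow (2 * L)).comp (tendsto_add_atTop_nat 2))
  have hx₀S : x₀ ∈ S := by
    obtain ⟨x, hxS, rfl⟩ := (hS.and hx₀).exists
    exact hxS
  have hmass : μ {x₀} = μ S := (measure_congr (eventuallyEq_univ.2 hx₀)).trans hSuniv.symm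
  refine ⟨x₀, hx₀S, hmass, ?_⟩
  rw [Measure.restrict_eq_self_of_ae_mem hS, ← hmass, ← Measure.restrict_singleton,
    Measure.restrict_eq_self_of_ae_mem (s := {x₀}) hx₀]

/-- If a nonnegative finite measure on `(0,L]` with positive total
mass concentrates, at every dyadic scale `2⁻ⁿ` (`n ≥ 2`), all its mass on a union of
two consecutive dyadic subintervals, then it is a point mass at some `x₀ ∈ (0,L]`. -/
theorem concentration_implies_point_mass
    (L : ℝ) (hL : 0 < L) (μ : Measure ℝ)
    (hsupp : μ ((Ioc (0 : ℝ) L)ᶜ) = 0)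
    (hfin : μ (Ioc (0 : ℝ) L) ≠ ⊤)
    (hpos : 0 < μ (Ioc (0 : ℝ) L))
    (hyp : ∀ n : ℕ, 2 ≤ n → ∃ j : ℕ, j + 2 ≤ 2 ^ n ∧
      μ (Ioc (L * (j : ℝ) / 2 ^ n) (L * ((j : ℝ) + 2) / 2 ^ n)) = μ (Ioc (0 : ℝ) L)) :
    ∃ x₀ ∈ Ioc (0 : ℝ) L, μ {x₀} = μ (Ioc (0 : ℝ) L) ∧
      μ.restrict (Ioc (0 : ℝ) L) = μ (Ioc (0 : ℝ) L) • Measure.dirac x₀ :=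
  concentration_implies_point_mass_general L μ hsupp hfin hpos hyp
end

section
/- Let K satisfy Assumption A, let T > 0, and let f be a weak solution of the coagulation equation on [0,T] with kernel K and initial datum f_in. Let x₁ ∈ (0,∞) and η₀ ∈ (0, min(1, x₁)) be such that f_in(B(x₁, η₀/2)) > 0. Then for every t ∈ [0,T] there exists a constant C(t,x₁,η₀) > 0 (depending only on t, x₁, η₀, the kernel constants, and sup_{s∈[0,T]} ∫(1+v^γ) f(dv,s)) such that ∫_{B(x₁,η₀)} f(dv,t) ≥ C(t,x₁,η₀)·f_in(B(x₁,η₀/2)) > 0. -/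
open MeasureTheory Set Filter

noncomputable section

/-- Assumption A on the coagulation kernel `K(v,v') = h(v,v') g(v/(v+v'))`. -/
structure KernelAssumptionA (K : ℝ → ℝ → ℝ) (h : ℝ → ℝ → ℝ) (g : ℝ → ℝ)
    (γ H H₀ H₁ G₀ G₁ k : ℝ) : Prop where
  K_nonneg : ∀ v v', 0 ≤ v → 0 ≤ v' → 0 ≤ K v v'
  K_eq : ∀ v v', 0 ≤ v → 0 ≤ v' → 0 < v + v' →
      K v v' = h v v' * g (v / (v + v'))
  h_cont : ContinuousOn (fun p : ℝ × ℝ => h p.1 p.2) (Ici 0 ×ˢ Ici 0)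
  h_symm : ∀ v v', h v v' = h v' v
  γ_gt_one : 1 < γ
  H_gt_one : 1 < H
  H₀_pos : 0 < H₀
  h_lower : ∀ v v', 0 ≤ v → 0 ≤ v' → H < v + v' →
      H₀ * (v ^ γ + v' ^ γ) ≤ h v v'
  h_posOn : ∀ R : ℝ, 0 < R → ∃ C : ℝ, 0 < C ∧
      ∀ v ∈ Icc (1 / R) R, ∀ v' ∈ Icc (1 / R) R, C ≤ h v v'
  H₁_pos : 0 < H₁
  h_upper : ∀ v v', 0 ≤ v → 0 ≤ v' → h v v' ≤ H₁ * (v ^ γ + v' ^ γ)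
  g_cont : ContinuousOn g (Icc 0 1)
  g_symm : ∀ x ∈ Icc (0 : ℝ) 1, g x = g (1 - x)
  g_half : g (1 / 2) = 0
  G₀_pos : 0 < G₀
  G₁_pos : 0 < G₁
  k_ge_one : 1 ≤ k
  g_lower : ∀ x ∈ Icc (0 : ℝ) 1, G₀ * |x - 1 / 2| ^ k ≤ g x
  g_upper : ∀ x ∈ Icc (0 : ℝ) 1, g x ≤ G₁

/-- Weak solution of the coagulation equation on `[0, T]` with kernel `K`
and initial datum `fin`, in the sense of measures on `(0,∞)`. -/
structure IsWeakSolution (K : ℝ → ℝ → ℝ) (γ T : ℝ)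
    (f : ℝ → Measure ℝ) (fin : Measure ℝ) : Prop where
  conc : ∀ t ∈ Icc (0 : ℝ) T, f t (Iic 0) = 0
  time_cont : ∀ φ : ℝ → ℝ, Continuous φ → (∃ M : ℝ, ∀ v, |φ v| ≤ M) →
      ContinuousOn (fun t => ∫ v, φ v ∂(f t)) (Icc (0 : ℝ) T)
  moment_bound : ∃ C : ℝ, ∀ t ∈ Icc (0 : ℝ) T,
      Integrable (fun v => 1 + v ^ γ) (f t) ∧ (∫ v, (1 + v ^ γ) ∂(f t)) ≤ C
  weak_form : ∀ φ : ℝ → ℝ, Continuous φ → HasCompactSupport φ →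
      tsupport φ ⊆ Ioi 0 → ∀ t ∈ Icc (0 : ℝ) T,
      (∫ v, φ v ∂(f t)) - (∫ v, φ v ∂fin) =
        (1 / 2) * ∫ s in (0 : ℝ)..t,
          (∫ v, (∫ v', K v v' * (φ (v + v') - φ v - φ v') ∂(f s)) ∂(f s))

/-- The solution conserves mass on `[0, T]`. -/
def IsMassConserving (T : ℝ) (f : ℝ → Measure ℝ) (fin : Measure ℝ) : Prop :=
  Integrable (fun v => v) fin ∧
    ∀ t ∈ Icc (0 : ℝ) T,
      Integrable (fun v => v) (f t) ∧ (∫ v, v ∂(f t)) = ∫ v, v ∂fin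

/-- `μ` is a single Dirac measure `M • δ_V` with `M, V ∈ (0,∞)`. -/
def IsSingleDirac (μ : Measure ℝ) : Prop :=
  ∃ M V : ℝ, 0 < M ∧ 0 < V ∧ μ = ENNReal.ofReal M • Measure.dirac V

lemma K_upper {K h : ℝ → ℝ → ℝ} {g : ℝ → ℝ} {γ H H₀ H₁ G₀ G₁ k : ℝ}
    (hK : KernelAssumptionA K h g γ H H₀ H₁ G₀ G₁ k)
    {v v' : ℝ} (hv : 0 ≤ v) (hv' : 0 ≤ v') (hvv : 0 < v + v') :
    K v v' ≤ G₁ * H₁ * (v ^ γ + v' ^ γ) := by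
  have hx : v / (v + v') ∈ Icc (0:ℝ) 1 :=
    ⟨div_nonneg hv hvv.le, (div_le_one hvv).2 (le_add_of_nonneg_right hv')⟩
  have hg0 : 0 ≤ g (v / (v + v')) := by
    have := hK.g_lower _ hx
    have h1 : 0 ≤ G₀ * |v / (v + v') - 1 / 2| ^ k :=
      mul_nonneg hK.G₀_pos.le (Real.rpow_nonneg (abs_nonneg _) k)
    linarith
  have hRHS : 0 ≤ v ^ γ + v' ^ γ :=
    add_nonneg (Real.rpow_nonneg hv γ) (Real.rpow_nonneg hv' γ)
  rw [hK.K_eq v v' hv hv' hvv]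
  rcases eq_or_lt_of_le hg0 with hg | hg
  · rw [← hg, mul_zero]
    exact mul_nonneg (mul_nonneg hK.G₁_pos.le hK.H₁_pos.le) hRHS
  · have hh : 0 ≤ h v v' := by
      have hKnn := hK.K_nonneg v v' hv hv'
      rw [hK.K_eq v v' hv hv' hvv] at hKnn
      exact nonneg_of_mul_nonneg_right (by linarith [hKnn] : 0 ≤ g (v / (v + v')) * h v v') hg
    calc h v v' * g (v / (v + v')) ≤ h v v' * G₁ :=
          mul_le_mul_of_nonneg_left (hK.g_upper _ hx) hh
      _ ≤ H₁ * (v ^ γ + v' ^ γ) * G₁ :=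
          mul_le_mul_of_nonneg_right (hK.h_upper v v' hv hv') hK.G₁_pos.le
      _ = G₁ * H₁ * (v ^ γ + v' ^ γ) := by ring

lemma finite_of_conc_mom {γ : ℝ} (μ : Measure ℝ) (hc : μ (Iic 0) = 0)
    (hm : Integrable (fun v => 1 + v ^ γ) μ) : IsFiniteMeasure μ := by
  constructor
  have hsub : Ioi (0:ℝ) ⊆ {v : ℝ | 1 ≤ 1 + v ^ γ} := by
    intro v hv
    have : 0 ≤ v ^ γ := (Real.rpow_pos_of_pos hv γ).le
    simpa using this
  have h1 : μ (Ioi 0) < ⊤ :=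
    lt_of_le_of_lt (measure_mono hsub) (hm.measure_ge_lt_top one_pos)
  have : μ univ ≤ μ (Iic 0) + μ (Ioi 0) := by
    rw [← Iic_union_Ioi (a := (0:ℝ))]
    exact measure_union_le _ _
  rw [hc, zero_add] at this
  exact lt_of_le_of_lt this h1

lemma gronwall_low (v : ℝ → ℝ) (hv : Continuous v) (l t : ℝ) (hl : 0 ≤ l) (ht : 0 ≤ t)
    (hineq : ∀ r₁ r₂, 0 ≤ r₁ → r₁ ≤ r₂ → r₂ ≤ t →
      v r₁ - l * ∫ s in r₁..r₂, v s ≤ v r₂) :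
    v 0 * Real.exp (-(l * t)) ≤ v t := by
  set m : ℝ → ℝ := fun r => ∫ s in (0:ℝ)..r, v s with hm
  have hmd : ∀ r, HasDerivAt m (v r) r := by
    intro r
    exact intervalIntegral.integral_hasDerivAt_right (hv.intervalIntegrable _ _)
      (hv.stronglyMeasurable.stronglyMeasurableAtFilter) hv.continuousAt
  set p : ℝ → ℝ := fun r => v r + l * m r with hp
  have hpmono : MonotoneOn p (Icc 0 t) := by
    intro r₁ h₁ r₂ h₂ h12
    have hadd : m r₁ + ∫ s in r₁..r₂, v s = m r₂ :=
      intervalIntegral.integral_add_adjacent_intervals (hv.intervalIntegrable _ _)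
        (hv.intervalIntegrable _ _)
    have := hineq r₁ r₂ h₁.1 h12 h₂.2
    simp only [hp]
    nlinarith [this, hadd]
  set C : ℝ := p t with hC
  set G : ℝ → ℝ := fun r => Real.exp (l * r) * (C - l * m r) with hG
  have hGd : ∀ r, HasDerivAt G (l * Real.exp (l * r) * (C - p r)) r := by
    intro r
    have h1 : HasDerivAt (fun r : ℝ => Real.exp (l * r)) (Real.exp (l * r) * l) r := by
      simpa using ((hasDerivAt_id r).const_mul l).exp
    have h2 : HasDerivAt (fun r => C - l * m r) (-(l * v r)) r := by
      simpa using ((hmd r).const_mul l).const_sub C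
    have := h1.mul h2
    refine this.congr_deriv ?_
    show _ = l * Real.exp (l * r) * (C - (v r + l * m r))
    ring
  have hGmono : MonotoneOn G (Icc 0 t) := by
    apply monotoneOn_of_deriv_nonneg (convex_Icc 0 t)
    · exact fun x _ => ((hGd x).continuousAt).continuousWithinAt
    · exact fun x _ => ((hGd x).differentiableAt).differentiableWithinAt
    · intro x hx
      rw [interior_Icc] at hx
      rw [(hGd x).deriv]
      have hpx : p x ≤ C := hpmono ⟨hx.1.le, hx.2.le⟩ (right_mem_Icc.2 ht) hx.2.le
      exact mul_nonneg (mul_nonneg hl (Real.exp_pos _).le) (sub_nonneg.2 hpx)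
  have h0t : G 0 ≤ G t := hGmono (left_mem_Icc.2 ht) (right_mem_Icc.2 ht) ht
  have hm0 : m 0 = 0 := intervalIntegral.integral_same
  have hG0 : G 0 = C := by simp [hG, hm0]
  have hvt : v t = C - l * m t := by simp only [hC, hp]; ring
  have hp0 : v 0 ≤ C := by
    have := hpmono (left_mem_Icc.2 ht) (right_mem_Icc.2 ht) ht
    simp only [hp, hm0] at this
    linarith
  have hE : Real.exp (-(l * t)) * Real.exp (l * t) = 1 := by
    rw [← Real.exp_add]; simp
  have hGt : C ≤ Real.exp (l * t) * v t := by rw [hvt]; rw [hG0] at h0t; exact h0t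
  have hEp : 0 < Real.exp (-(l * t)) := Real.exp_pos _
  have h1 : Real.exp (-(l * t)) * C ≤ Real.exp (-(l * t)) * (Real.exp (l * t) * v t) :=
    mul_le_mul_of_nonneg_left hGt hEp.le
  rw [← mul_assoc, hE, one_mul] at h1
  have h2 : v 0 * Real.exp (-(l * t)) ≤ C * Real.exp (-(l * t)) :=
    mul_le_mul_of_nonneg_right hp0 hEp.le
  nlinarith [h1, h2]

set_option maxHeartbeats 1600000 in
/-- Persistence of mass near a charged ball: if
`f_in(B(x₁, η₀/2)) > 0` then for every `t ∈ [0,T]` there is a constant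
`C(t,x₁,η₀) > 0` with `f(B(x₁,η₀), t) ≥ C(t,x₁,η₀) · f_in(B(x₁, η₀/2)) > 0`. -/
theorem ball_mass_persists
    (K h : ℝ → ℝ → ℝ) (g : ℝ → ℝ) (γ H H₀ H₁ G₀ G₁ k : ℝ)
    (hK : KernelAssumptionA K h g γ H H₀ H₁ G₀ G₁ k)
    (T : ℝ) (hT : 0 < T)
    (fin : Measure ℝ) (hconc : fin (Iic 0) = 0)
    (hγmom : Integrable (fun v => 1 + v ^ γ) fin)
    (f : ℝ → Measure ℝ) (hf : IsWeakSolution K γ T f fin)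
    (x₁ η₀ : ℝ) (hx₁ : 0 < x₁) (hη₀ : η₀ ∈ Ioo 0 (min 1 x₁))
    (hA : 0 < fin (Metric.ball x₁ (η₀ / 2))) :
    ∀ t ∈ Icc (0 : ℝ) T, ∃ C : ℝ, 0 < C ∧
      ENNReal.ofReal C * fin (Metric.ball x₁ (η₀ / 2)) ≤ f t (Metric.ball x₁ η₀) ∧
      0 < f t (Metric.ball x₁ η₀) := by
  obtain ⟨hη₀pos, hη₀lt⟩ := hη₀
  have hη1 : η₀ < 1 := lt_of_lt_of_le hη₀lt (min_le_left _ _)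
  have hηx : η₀ < x₁ := lt_of_lt_of_le hη₀lt (min_le_right _ _)
  have hγ0 : (0:ℝ) ≤ γ := by linarith [hK.γ_gt_one]
  -- the bump function
  set φ : ℝ → ℝ := fun v => max 0 (min 1 (2 / η₀ * (η₀ - |v - x₁|))) with hφdef
  have hφcont : Continuous φ := by
    apply continuous_const.max
    apply continuous_const.min
    exact continuous_const.mul (continuous_const.sub ((continuous_id.sub continuous_const).abs))
  have hφnn : ∀ v, 0 ≤ φ v := fun v => le_max_left _ _
  have hφle1 : ∀ v, φ v ≤ 1 := fun v => max_le zero_le_one (min_le_left _ _)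
  have hφ1 : ∀ v, |v - x₁| ≤ η₀ / 2 → φ v = 1 := by
    intro v hv
    have h1 : (1:ℝ) ≤ 2 / η₀ * (η₀ - |v - x₁|) := by
      rw [div_mul_eq_mul_div, le_div_iff₀ hη₀pos]
      nlinarith [abs_nonneg (v - x₁)]
    rw [hφdef]
    simp only [min_eq_left h1, max_eq_right zero_le_one]
  have hφ0 : ∀ v, η₀ ≤ |v - x₁| → φ v = 0 := by
    intro v hv
    have h1 : 2 / η₀ * (η₀ - |v - x₁|) ≤ 0 := by
      apply mul_nonpos_of_nonneg_of_nonpos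
      · positivity
      · linarith
    rw [hφdef]
    simp only [max_eq_left (le_trans (min_le_right _ _) h1)]
  have hsupp : Function.support φ ⊆ Metric.ball x₁ η₀ := by
    intro v hv
    rw [Metric.mem_ball, Real.dist_eq]
    by_contra hc
    exact hv (hφ0 v (not_lt.1 hc))
  have htsupp : tsupport φ ⊆ Icc (x₁ - η₀) (x₁ + η₀) := by
    apply closure_minimal _ isClosed_Icc
    refine hsupp.trans ?_
    rw [Real.ball_eq_Ioo]
    exact Ioo_subset_Icc_self
  have hφcomp : HasCompactSupport φ :=
    IsCompact.of_isClosed_subset isCompact_Icc isClosed_closure htsupp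
  have htsuppIoi : tsupport φ ⊆ Ioi 0 := by
    refine htsupp.trans ?_
    intro v hv
    have := hv.1
    simp only [mem_Ioi]
    linarith
  set B : ℝ := x₁ + η₀ with hBdef
  have hBpos : 0 < B := by simp only [hBdef]; linarith
  have hφB : ∀ w : ℝ, 0 ≤ w → w ^ γ * φ w ≤ B ^ γ * φ w := by
    intro w hw
    rcases le_or_gt w B with hwB | hwB
    · exact mul_le_mul_of_nonneg_right (Real.rpow_le_rpow hw hwB hγ0) (hφnn w)
    · have : φ w = 0 := by
        apply hφ0
        rw [abs_of_nonneg (by simp only [hBdef] at hwB; linarith)]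
        simp only [hBdef] at hwB; linarith
      rw [this, mul_zero, mul_zero]
  -- constants
  obtain ⟨Cm, hCm⟩ := hf.moment_bound
  set M1 : ℝ := max 1 (B ^ γ) with hM1def
  have hM11 : (1:ℝ) ≤ M1 := le_max_left _ _
  have hM1B : B ^ γ ≤ M1 := le_max_right _ _
  set c : ℝ := G₁ * H₁ * M1 with hcdef
  have hcpos : 0 < c := by
    apply mul_pos (mul_pos hK.G₁_pos hK.H₁_pos); linarith
  have hT0 : (0:ℝ) ∈ Icc (0:ℝ) T := ⟨le_rfl, hT.le⟩
  -- finiteness of measures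
  have hfinmeas : ∀ s ∈ Icc (0:ℝ) T, IsFiniteMeasure (f s) := fun s hs =>
    finite_of_conc_mom (f s) (hf.conc s hs) (hCm s hs).1
  haveI hfinfin : IsFiniteMeasure fin := finite_of_conc_mom fin hconc hγmom
  have hCm0 : 0 ≤ Cm := by
    have h1 := (hCm 0 hT0).2
    have h2 : 0 ≤ ∫ v, (1 + v ^ γ) ∂(f 0) := by
      apply integral_nonneg_of_ae
      have hae : ∀ᵐ v ∂(f 0), 0 < v := by
        rw [ae_iff]
        have : {v : ℝ | ¬ 0 < v} = Iic 0 := by ext v; simp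
        rw [this]
        exact hf.conc 0 hT0
      filter_upwards [hae] with v hv
      have := (Real.rpow_pos_of_pos hv γ).le
      simp only [Pi.zero_apply]
      linarith
    linarith
  -- the solution evaluated against φ
  set u : ℝ → ℝ := fun s => ∫ v, φ v ∂(f s) with hudef
  have hucont : ContinuousOn u (Icc 0 T) :=
    hf.time_cont φ hφcont ⟨1, fun v => abs_le.2 ⟨by linarith [hφnn v], hφle1 v⟩⟩
  set A₀ : ℝ := ∫ v, φ v ∂fin with hA₀def
  set D : ℝ → ℝ := fun s =>
    ∫ v, (∫ v', K v v' * (φ (v + v') - φ v - φ v') ∂(f s)) ∂(f s) with hDdef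
  have hweak : ∀ r ∈ Icc (0:ℝ) T, u r - A₀ = (1/2) * ∫ s in (0:ℝ)..r, D s :=
    hf.weak_form φ hφcont hφcomp htsuppIoi
  have hus_nn : ∀ s, 0 ≤ u s := fun s => integral_nonneg hφnn
  -- key lower bound on D
  have hD : ∀ s ∈ Icc (0:ℝ) T, -(2 * c * Cm) * u s ≤ D s := by
    intro s hs
    haveI := hfinmeas s hs
    have hae : ∀ᵐ v ∂(f s), 0 < v := by
      rw [ae_iff]
      have : {v : ℝ | ¬ 0 < v} = Iic 0 := by ext v; simp
      rw [this]
      exact hf.conc s hs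
    have hint1 : Integrable (fun v => 1 + v ^ γ) (f s) := (hCm s hs).1
    have hMs_le : (∫ v, (1 + v ^ γ) ∂(f s)) ≤ Cm := (hCm s hs).2
    have hMs_nn : 0 ≤ ∫ v, (1 + v ^ γ) ∂(f s) := by
      apply integral_nonneg_of_ae
      filter_upwards [hae] with v hv
      have := (Real.rpow_pos_of_pos hv γ).le
      simp only [Pi.zero_apply]
      linarith
    have hφint : Integrable φ (f s) := hφcont.integrable_of_hasCompactSupport hφcomp
    -- pointwise inner bound
    have hpt : ∀ v, 0 < v → ∀ v', 0 < v' →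
        -(c * ((1 + v' ^ γ) * φ v + (1 + v ^ γ) * φ v')) ≤
          K v v' * (φ (v + v') - φ v - φ v') := by
      intro v hv v' hv'
      have hvv : 0 < v + v' := by linarith
      have hKnn : 0 ≤ K v v' := hK.K_nonneg v v' hv.le hv'.le
      have hKle : K v v' ≤ G₁ * H₁ * (v ^ γ + v' ^ γ) := K_upper hK hv.le hv'.le hvv
      have hvg : 0 ≤ v ^ γ := Real.rpow_nonneg hv.le γ
      have hv'g : 0 ≤ v' ^ γ := Real.rpow_nonneg hv'.le γ
      have hGH : 0 ≤ G₁ * H₁ := (mul_pos hK.G₁_pos hK.H₁_pos).le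
      have q1 : (v ^ γ + v' ^ γ) * φ v ≤ M1 * ((1 + v' ^ γ) * φ v) := by
        have f1 : v ^ γ * φ v ≤ B ^ γ * φ v := hφB v hv.le
        have f2 : B ^ γ * φ v ≤ M1 * φ v := mul_le_mul_of_nonneg_right hM1B (hφnn v)
        have f3 : v' ^ γ * φ v ≤ M1 * (v' ^ γ * φ v) :=
          le_mul_of_one_le_left (mul_nonneg hv'g (hφnn v)) hM11
        nlinarith
      have q2 : (v ^ γ + v' ^ γ) * φ v' ≤ M1 * ((1 + v ^ γ) * φ v') := by
        have f1 : v' ^ γ * φ v' ≤ B ^ γ * φ v' := hφB v' hv'.le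
        have f2 : B ^ γ * φ v' ≤ M1 * φ v' := mul_le_mul_of_nonneg_right hM1B (hφnn v')
        have f3 : v ^ γ * φ v' ≤ M1 * (v ^ γ * φ v') :=
          le_mul_of_one_le_left (mul_nonneg hvg (hφnn v')) hM11
        nlinarith
      have e1 : K v v' * φ v ≤ c * ((1 + v' ^ γ) * φ v) := by
        calc K v v' * φ v ≤ (G₁ * H₁ * (v ^ γ + v' ^ γ)) * φ v :=
              mul_le_mul_of_nonneg_right hKle (hφnn v)
          _ = (G₁ * H₁) * ((v ^ γ + v' ^ γ) * φ v) := by ring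
          _ ≤ (G₁ * H₁) * (M1 * ((1 + v' ^ γ) * φ v)) :=
              mul_le_mul_of_nonneg_left q1 hGH
          _ = c * ((1 + v' ^ γ) * φ v) := by rw [hcdef]; ring
      have e2 : K v v' * φ v' ≤ c * ((1 + v ^ γ) * φ v') := by
        calc K v v' * φ v' ≤ (G₁ * H₁ * (v ^ γ + v' ^ γ)) * φ v' :=
              mul_le_mul_of_nonneg_right hKle (hφnn v')
          _ = (G₁ * H₁) * ((v ^ γ + v' ^ γ) * φ v') := by ring
          _ ≤ (G₁ * H₁) * (M1 * ((1 + v ^ γ) * φ v')) :=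
              mul_le_mul_of_nonneg_left q2 hGH
          _ = c * ((1 + v ^ γ) * φ v') := by rw [hcdef]; ring
      have hKA : 0 ≤ K v v' * φ (v + v') := mul_nonneg hKnn (hφnn (v + v'))
      nlinarith [hKA, e1, e2]
    -- inner integral bound
    have hψ : ∀ v, 0 < v →
        -(c * (Cm * φ v + (1 + v ^ γ) * u s)) ≤
          ∫ v', K v v' * (φ (v + v') - φ v - φ v') ∂(f s) := by
      intro v hv
      have hℓnn : 0 ≤ c * (Cm * φ v + (1 + v ^ γ) * u s) := by
        have := (Real.rpow_pos_of_pos hv γ).le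
        have := hφnn v
        have := hus_nn s
        positivity
      by_cases hInt : Integrable (fun v' => K v v' * (φ (v + v') - φ v - φ v')) (f s)
      · have hIa : Integrable (fun v' : ℝ => (1 + v' ^ γ) * φ v) (f s) :=
          hint1.mul_const (φ v)
        have hIb : Integrable (fun v' : ℝ => (1 + v ^ γ) * φ v') (f s) :=
          hφint.const_mul (1 + v ^ γ)
        have hIc : Integrable (fun v' : ℝ => (1 + v' ^ γ) * φ v + (1 + v ^ γ) * φ v') (f s) :=
          hIa.add hIb
        have hId : Integrable (fun v' : ℝ => c * ((1 + v' ^ γ) * φ v + (1 + v ^ γ) * φ v')) (f s) :=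
          hIc.const_mul c
        have hLint : Integrable
            (fun v' => -(c * ((1 + v' ^ γ) * φ v + (1 + v ^ γ) * φ v'))) (f s) := hId.neg
        have hLle : (fun v' => -(c * ((1 + v' ^ γ) * φ v + (1 + v ^ γ) * φ v'))) ≤ᵐ[f s]
            (fun v' => K v v' * (φ (v + v') - φ v - φ v')) := by
          filter_upwards [hae] with v' hv'
          exact hpt v hv v' hv'
        have hmono := integral_mono_ae hLint hInt hLle
        have hLval : (∫ v', -(c * ((1 + v' ^ γ) * φ v + (1 + v ^ γ) * φ v')) ∂(f s)) =
            -(c * ((∫ v', (1 + v' ^ γ) ∂(f s)) * φ v + (1 + v ^ γ) * u s)) := by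
          rw [integral_neg, integral_const_mul, integral_add hIa hIb,
            integral_mul_const, integral_const_mul]
        rw [hLval] at hmono
        refine le_trans ?_ hmono
        have h1 : (∫ v', (1 + v' ^ γ) ∂(f s)) * φ v ≤ Cm * φ v :=
          mul_le_mul_of_nonneg_right hMs_le (hφnn v)
        have h2 : c * ((∫ v', (1 + v' ^ γ) ∂(f s)) * φ v + (1 + v ^ γ) * u s) ≤
            c * (Cm * φ v + (1 + v ^ γ) * u s) :=
          mul_le_mul_of_nonneg_left (by linarith) hcpos.le
        linarith
      · rw [integral_undef hInt]
        linarith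
    -- outer integral bound
    by_cases hOut : Integrable
        (fun v => ∫ v', K v v' * (φ (v + v') - φ v - φ v') ∂(f s)) (f s)
    · have hJa : Integrable (fun v : ℝ => Cm * φ v) (f s) := hφint.const_mul Cm
      have hJb : Integrable (fun v : ℝ => (1 + v ^ γ) * u s) (f s) := hint1.mul_const (u s)
      have hJc : Integrable (fun v : ℝ => Cm * φ v + (1 + v ^ γ) * u s) (f s) := hJa.add hJb
      have hJd : Integrable (fun v : ℝ => c * (Cm * φ v + (1 + v ^ γ) * u s)) (f s) :=
        hJc.const_mul c
      have hℓint : Integrable (fun v => -(c * (Cm * φ v + (1 + v ^ γ) * u s))) (f s) := hJd.neg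
      have hle : (fun v => -(c * (Cm * φ v + (1 + v ^ γ) * u s))) ≤ᵐ[f s]
          (fun v => ∫ v', K v v' * (φ (v + v') - φ v - φ v') ∂(f s)) := by
        filter_upwards [hae] with v hv
        exact hψ v hv
      have hmono := integral_mono_ae hℓint hOut hle
      have hval : (∫ v, -(c * (Cm * φ v + (1 + v ^ γ) * u s)) ∂(f s)) =
          -(c * (Cm * u s + (∫ v, (1 + v ^ γ) ∂(f s)) * u s)) := by
        rw [integral_neg, integral_const_mul, integral_add hJa hJb,
          integral_const_mul, integral_mul_const]
      rw [hval] at hmono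
      refine le_trans ?_ hmono
      have h1 : (∫ v, (1 + v ^ γ) ∂(f s)) * u s ≤ Cm * u s :=
        mul_le_mul_of_nonneg_right hMs_le (hus_nn s)
      nlinarith [hcpos.le, hus_nn s]
    · have hD0 : D s = 0 := integral_undef hOut
      rw [hD0]
      nlinarith [mul_nonneg (mul_nonneg hcpos.le hCm0) (hus_nn s)]
  -- Gronwall step: for every r ∈ [0,T], A₀ * exp(-(c*Cm)*r) ≤ u r
  intro t ht
  have hl0 : 0 ≤ c * Cm := mul_nonneg hcpos.le hCm0
  have hA₀nn : 0 ≤ A₀ := integral_nonneg hφnn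
  have hkey : A₀ * Real.exp (-(c * Cm * t)) ≤ u t := by
    by_cases hII : IntervalIntegrable D MeasureTheory.volume 0 t
    · -- u 0 = A₀
      have hu0 : u 0 = A₀ := by
        have := hweak 0 hT0
        simp only [intervalIntegral.integral_same, mul_zero] at this
        linarith
      set v : ℝ → ℝ := fun r => u (min (max r 0) t) with hvdef
      have hclamp : ∀ r, min (max r 0) t ∈ Icc (0:ℝ) T := by
        intro r
        constructor
        · exact le_min (le_max_right _ _) ht.1
        · exact le_trans (min_le_right _ _) ht.2
      have hvcont : Continuous v := by
        apply hucont.comp_continuous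
        · exact (continuous_id.max continuous_const).min continuous_const
        · exact hclamp
      have hveq : ∀ r ∈ Icc (0:ℝ) t, v r = u r := by
        intro r hr
        have : min (max r 0) t = r := by
          rw [max_eq_left hr.1, min_eq_left hr.2]
        rw [hvdef]; simp only [this]
      have hineq : ∀ r₁ r₂, 0 ≤ r₁ → r₁ ≤ r₂ → r₂ ≤ t →
          v r₁ - (c * Cm) * ∫ s in r₁..r₂, v s ≤ v r₂ := by
        intro r₁ r₂ h₁ h12 h₂
        have hr₁T : r₁ ∈ Icc (0:ℝ) T := ⟨h₁, le_trans (le_trans h12 h₂) ht.2⟩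
        have hr₂T : r₂ ∈ Icc (0:ℝ) T := ⟨le_trans h₁ h12, le_trans h₂ ht.2⟩
        have hIccsub : Icc r₁ r₂ ⊆ Icc (0:ℝ) T := Icc_subset_Icc hr₁T.1 hr₂T.2
        have hvint : ∫ s in r₁..r₂, v s = ∫ s in r₁..r₂, u s := by
          apply intervalIntegral.integral_congr
          intro x hx
          rw [uIcc_of_le h12] at hx
          exact hveq x ⟨le_trans h₁ hx.1, le_trans hx.2 h₂⟩
        have hII1 : IntervalIntegrable D MeasureTheory.volume 0 r₁ := by
          apply hII.mono_set
          rw [uIcc_of_le h₁, uIcc_of_le (le_trans h₁ (le_trans h12 h₂))]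
          exact Icc_subset_Icc le_rfl (le_trans h12 h₂)
        have hII2 : IntervalIntegrable D MeasureTheory.volume r₁ r₂ := by
          apply hII.mono_set
          rw [uIcc_of_le h12, uIcc_of_le (le_trans h₁ (le_trans h12 h₂))]
          exact Icc_subset_Icc h₁ h₂
        have hsplit : (∫ s in (0:ℝ)..r₁, D s) + ∫ s in r₁..r₂, D s =
            ∫ s in (0:ℝ)..r₂, D s :=
          intervalIntegral.integral_add_adjacent_intervals hII1 hII2
        have hw1 := hweak r₁ hr₁T
        have hw2 := hweak r₂ hr₂T
        have huII : IntervalIntegrable (fun s => -(2 * c * Cm) * u s)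
            MeasureTheory.volume r₁ r₂ := by
          apply ContinuousOn.intervalIntegrable
          rw [uIcc_of_le h12]
          exact continuousOn_const.mul (hucont.mono hIccsub)
        have hDmono : (∫ s in r₁..r₂, -(2 * c * Cm) * u s) ≤ ∫ s in r₁..r₂, D s := by
          apply intervalIntegral.integral_mono_on h12 huII hII2
          intro x hx
          exact hD x (hIccsub hx)
        rw [intervalIntegral.integral_const_mul] at hDmono
        rw [hveq r₁ ⟨h₁, le_trans h12 h₂⟩, hveq r₂ ⟨le_trans h₁ h12, h₂⟩, hvint]
        nlinarith [hDmono, hsplit, hw1, hw2]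
      have hgron := gronwall_low v hvcont (c * Cm) t hl0 ht.1 hineq
      have hv0 : v 0 = A₀ := by
        rw [hveq 0 ⟨le_rfl, ht.1⟩]; exact hu0
      have hvt : v t = u t := hveq t ⟨ht.1, le_rfl⟩
      rw [hv0, hvt] at hgron
      exact hgron
    · have hut : u t = A₀ := by
        have := hweak t ht
        rw [intervalIntegral.integral_undef hII] at this
        simp at this
        linarith
      rw [hut]
      have hE1 : Real.exp (-(c * Cm * t)) ≤ 1 := by
        apply Real.exp_le_one_iff.2
        have : 0 ≤ c * Cm * t := mul_nonneg hl0 ht.1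
        linarith
      nlinarith [hA₀nn]
  -- conclusion
  haveI := hfinmeas t ht
  have hφintfin : Integrable φ fin := hφcont.integrable_of_hasCompactSupport hφcomp
  have hφintt : Integrable φ (f t) := hφcont.integrable_of_hasCompactSupport hφcomp
  have hbh : MeasurableSet (Metric.ball x₁ (η₀ / 2)) := Metric.isOpen_ball.measurableSet
  have hbb : MeasurableSet (Metric.ball x₁ η₀) := Metric.isOpen_ball.measurableSet
  have haA₀ : (fin (Metric.ball x₁ (η₀ / 2))).toReal ≤ A₀ := by
    have hind : Integrable ((Metric.ball x₁ (η₀ / 2)).indicator fun _ => (1:ℝ)) fin :=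
      (integrable_const 1).indicator hbh
    have hle : ∀ v, (Metric.ball x₁ (η₀ / 2)).indicator (fun _ => (1:ℝ)) v ≤ φ v := by
      intro v
      by_cases hv : v ∈ Metric.ball x₁ (η₀ / 2)
      · rw [indicator_of_mem hv]
        rw [Metric.mem_ball, Real.dist_eq] at hv
        rw [hφ1 v hv.le]
      · rw [indicator_of_notMem hv]
        exact hφnn v
    have := integral_mono hind hφintfin hle
    rwa [integral_indicator_const (1:ℝ) hbh, smul_eq_mul, mul_one] at this
  have hut_le : u t ≤ ((f t) (Metric.ball x₁ η₀)).toReal := by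
    have hind : Integrable ((Metric.ball x₁ η₀).indicator fun _ => (1:ℝ)) (f t) :=
      (integrable_const 1).indicator hbb
    have hle : ∀ v, φ v ≤ (Metric.ball x₁ η₀).indicator (fun _ => (1:ℝ)) v := by
      intro v
      by_cases hv : v ∈ Metric.ball x₁ η₀
      · rw [indicator_of_mem hv]
        exact hφle1 v
      · rw [indicator_of_notMem hv]
        have : η₀ ≤ |v - x₁| := by
          rw [Metric.mem_ball, Real.dist_eq] at hv
          linarith [not_lt.1 hv]
        rw [hφ0 v this]
    have := integral_mono hφintt hind hle
    rwa [integral_indicator_const (1:ℝ) hbb, smul_eq_mul, mul_one] at this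
  set a : ℝ := (fin (Metric.ball x₁ (η₀ / 2))).toReal with hadef
  have hane : fin (Metric.ball x₁ (η₀ / 2)) ≠ ⊤ := measure_ne_top _ _
  have hapos : 0 < a := ENNReal.toReal_pos hA.ne' hane
  set E : ℝ := Real.exp (-(c * Cm * t)) with hEdef
  have hEpos : 0 < E := Real.exp_pos _
  refine ⟨E, hEpos, ?_, ?_⟩
  · have h1 : E * a ≤ u t := by
      have : a * E ≤ A₀ * E := mul_le_mul_of_nonneg_right haA₀ hEpos.le
      nlinarith [hkey]
    have h2 : E * a ≤ ((f t) (Metric.ball x₁ η₀)).toReal := le_trans h1 hut_le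
    calc ENNReal.ofReal E * fin (Metric.ball x₁ (η₀ / 2))
        = ENNReal.ofReal E * ENNReal.ofReal a := by rw [hadef, ENNReal.ofReal_toReal hane]
      _ = ENNReal.ofReal (E * a) := (ENNReal.ofReal_mul hEpos.le).symm
      _ ≤ ENNReal.ofReal (((f t) (Metric.ball x₁ η₀)).toReal) := ENNReal.ofReal_le_ofReal h2
      _ = (f t) (Metric.ball x₁ η₀) := ENNReal.ofReal_toReal (measure_ne_top _ _)
  · have h1 : E * a ≤ u t := by
      have : a * E ≤ A₀ * E := mul_le_mul_of_nonneg_right haA₀ hEpos.le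
      nlinarith [hkey]
    have h2 : E * a ≤ ((f t) (Metric.ball x₁ η₀)).toReal := le_trans h1 hut_le
    have h3 : ENNReal.ofReal (E * a) ≤ (f t) (Metric.ball x₁ η₀) := by
      calc ENNReal.ofReal (E * a)
          ≤ ENNReal.ofReal (((f t) (Metric.ball x₁ η₀)).toReal) := ENNReal.ofReal_le_ofReal h2
        _ = (f t) (Metric.ball x₁ η₀) := ENNReal.ofReal_toReal (measure_ne_top _ _)
    exact lt_of_lt_of_le (ENNReal.ofReal_pos.2 (mul_pos hEpos hapos)) h3
end
end

section
/- The differential sedimentation kernel K(v,v') = |v^{2/3} − v'^{2/3}|·(v^{1/3} + v'^{1/3})² satisfies Assumption A with exponent γ = 4/3: namely K(v,v') = h(v,v')·g(v/(v+v')) where h(v,v') = (v+v')^{4/3} and g(x) = |x^{2/3} − (1−x)^{2/3}|·(x^{1/3} + (1−x)^{1/3})²; h is continuous, symmetric, satisfies 2^{−1/3}(v^{4/3} + v'^{4/3}) ≤ h(v,v') ≤ 2^{4/3}(v^{4/3} + v'^{4/3}) for all v,v' ≥ 0 and is bounded below by a positive constant on every set [1/R,R]², and g is continuous on [0,1] with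 g(x) = g(1−x), g(1/2) = 0 and (4/3)|x − 1/2| ≤ g(x) ≤ 4 for all x ∈ [0,1] (i.e., the lower bound holds with k = 1). -/
open MeasureTheory Set Filter

noncomputable section

lemma sed_cube (x : ℝ) (hx : 0 ≤ x) : (x ^ ((1 : ℝ) / 3)) ^ 3 = x := by
  rw [← Real.rpow_natCast (x ^ ((1 : ℝ) / 3)) 3, ← Real.rpow_mul hx]
  norm_num

lemma sed_sq (x : ℝ) (hx : 0 ≤ x) : x ^ ((2 : ℝ) / 3) = (x ^ ((1 : ℝ) / 3)) ^ 2 := by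
  rw [← Real.rpow_natCast (x ^ ((1 : ℝ) / 3)) 2, ← Real.rpow_mul hx]
  norm_num

lemma sed_key (a b : ℝ) (ha : 0 ≤ a) (hb : 0 ≤ b) (hab : 1 ≤ a + b) (h : b ≤ a) :
    (2 / 3 : ℝ) * (a ^ 3 - b ^ 3) ≤ (a ^ 2 - b ^ 2) * (a + b) ^ 2 := by
  nlinarith [mul_nonneg (mul_nonneg ha hb) (sub_nonneg.2 h), sq_nonneg (a + b),
    mul_nonneg (sub_nonneg.2 h) (sq_nonneg (a + b)),
    mul_nonneg (mul_nonneg (sub_nonneg.2 h) (sq_nonneg (a + b))) (sub_nonneg.2 hab),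
    mul_nonneg (mul_nonneg ha hb) (mul_nonneg (sub_nonneg.2 h) (sq_nonneg (a + b)))]

lemma sed_rpow13_ge (x : ℝ) (hx : 0 ≤ x) (hx1 : x ≤ 1) : x ≤ x ^ ((1 : ℝ) / 3) := by
  rcases eq_or_lt_of_le hx with h | h
  · simp [← h]
  · calc x = x ^ (1 : ℝ) := (Real.rpow_one x).symm
      _ ≤ x ^ ((1 : ℝ) / 3) := Real.rpow_le_rpow_of_exponent_ge h hx1 (by norm_num)

lemma sed_g_bounds (x : ℝ) (hx : x ∈ Icc (0 : ℝ) 1) :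
    (4 / 3 : ℝ) * |x - 1 / 2| ≤
        |x ^ ((2 : ℝ) / 3) - (1 - x) ^ ((2 : ℝ) / 3)| *
          (x ^ ((1 : ℝ) / 3) + (1 - x) ^ ((1 : ℝ) / 3)) ^ 2 ∧
      |x ^ ((2 : ℝ) / 3) - (1 - x) ^ ((2 : ℝ) / 3)| *
          (x ^ ((1 : ℝ) / 3) + (1 - x) ^ ((1 : ℝ) / 3)) ^ 2 ≤ 4 := by
  obtain ⟨hx0, hx1⟩ := hx
  have hy0 : (0 : ℝ) ≤ 1 - x := by linarith
  have hy1 : 1 - x ≤ 1 := by linarith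
  set a := x ^ ((1 : ℝ) / 3) with ha_def
  set b := (1 - x) ^ ((1 : ℝ) / 3) with hb_def
  have ha : 0 ≤ a := Real.rpow_nonneg hx0 _
  have hb : 0 ≤ b := Real.rpow_nonneg hy0 _
  have ha3 : a ^ 3 = x := sed_cube x hx0
  have hb3 : b ^ 3 = 1 - x := sed_cube (1 - x) hy0
  have ha2 : x ^ ((2 : ℝ) / 3) = a ^ 2 := sed_sq x hx0
  have hb2 : (1 - x) ^ ((2 : ℝ) / 3) = b ^ 2 := sed_sq (1 - x) hy0
  have ha1 : a ≤ 1 := Real.rpow_le_one hx0 hx1 (by norm_num)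
  have hb1 : b ≤ 1 := Real.rpow_le_one hy0 hy1 (by norm_num)
  have hab : 1 ≤ a + b := by
    have h1 := sed_rpow13_ge x hx0 hx1
    have h2 := sed_rpow13_ge (1 - x) hy0 hy1
    rw [← ha_def] at h1; rw [← hb_def] at h2; linarith
  have hx12 : x - 1 / 2 = (a ^ 3 - b ^ 3) / 2 := by rw [ha3, hb3]; ring
  rw [ha2, hb2, hx12]
  constructor
  · rcases le_total b a with h | h
    · have h3 : b ^ 3 ≤ a ^ 3 := pow_le_pow_left₀ hb h 3
      have h2 : b ^ 2 ≤ a ^ 2 := pow_le_pow_left₀ hb h 2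
      rw [abs_of_nonneg (by linarith : (0:ℝ) ≤ (a ^ 3 - b ^ 3) / 2),
        abs_of_nonneg (by linarith : (0:ℝ) ≤ a ^ 2 - b ^ 2)]
      have := sed_key a b ha hb hab h
      linarith
    · have h3 : a ^ 3 ≤ b ^ 3 := pow_le_pow_left₀ ha h 3
      have h2 : a ^ 2 ≤ b ^ 2 := pow_le_pow_left₀ ha h 2
      rw [abs_of_nonpos (by linarith : (a ^ 3 - b ^ 3) / 2 ≤ 0),
        abs_of_nonpos (by linarith : a ^ 2 - b ^ 2 ≤ 0)]
      have := sed_key b a hb ha (by linarith) h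
      nlinarith [sq_nonneg (a + b)]
  · have habs : |a ^ 2 - b ^ 2| ≤ 1 := by
      rw [abs_le]
      constructor <;> nlinarith
    have hsq : (a + b) ^ 2 ≤ 4 := by nlinarith
    calc |a ^ 2 - b ^ 2| * (a + b) ^ 2 ≤ 1 * 4 :=
          mul_le_mul habs hsq (sq_nonneg _) one_pos.le
      _ = 4 := by norm_num

lemma sed_h_bounds (v v' : ℝ) (hv : 0 ≤ v) (hv' : 0 ≤ v') :
    (2 : ℝ) ^ (-(1 / 3) : ℝ) * (v ^ ((4 : ℝ) / 3) + v' ^ ((4 : ℝ) / 3)) ≤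
        (v + v') ^ ((4 : ℝ) / 3) ∧
      (v + v') ^ ((4 : ℝ) / 3) ≤
        (2 : ℝ) ^ ((4 / 3) : ℝ) * (v ^ ((4 : ℝ) / 3) + v' ^ ((4 : ℝ) / 3)) := by
  constructor
  · have h1 : v ^ ((4 : ℝ) / 3) + v' ^ ((4 : ℝ) / 3) ≤ (v + v') ^ ((4 : ℝ) / 3) := by
      have h := NNReal.add_rpow_le_rpow_add v.toNNReal v'.toNNReal
        (by norm_num : (1 : ℝ) ≤ 4 / 3)
      have h' := NNReal.coe_le_coe.2 h
      push_cast at h'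
      rwa [Real.coe_toNNReal v hv, Real.coe_toNNReal v' hv'] at h'
    have h2 : (2 : ℝ) ^ (-(1 / 3) : ℝ) ≤ 1 :=
      Real.rpow_le_one_of_one_le_of_nonpos one_le_two (by norm_num)
    have h3 : 0 ≤ v ^ ((4 : ℝ) / 3) + v' ^ ((4 : ℝ) / 3) := by
      positivity
    calc (2 : ℝ) ^ (-(1 / 3) : ℝ) * (v ^ ((4 : ℝ) / 3) + v' ^ ((4 : ℝ) / 3))
        ≤ 1 * (v ^ ((4 : ℝ) / 3) + v' ^ ((4 : ℝ) / 3)) := by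
          exact mul_le_mul_of_nonneg_right h2 h3
      _ = v ^ ((4 : ℝ) / 3) + v' ^ ((4 : ℝ) / 3) := one_mul _
      _ ≤ (v + v') ^ ((4 : ℝ) / 3) := h1
  · have key : ∀ a b : ℝ, 0 ≤ a → 0 ≤ b → a ≤ b →
        (a + b) ^ ((4 : ℝ) / 3) ≤ (2 : ℝ) ^ ((4 / 3) : ℝ) *
          (a ^ ((4 : ℝ) / 3) + b ^ ((4 : ℝ) / 3)) := by
      intro a b ha hb hab
      calc (a + b) ^ ((4 : ℝ) / 3) ≤ (2 * b) ^ ((4 : ℝ) / 3) :=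
            Real.rpow_le_rpow (by linarith) (by linarith) (by norm_num)
        _ = (2 : ℝ) ^ ((4 / 3) : ℝ) * b ^ ((4 : ℝ) / 3) :=
            Real.mul_rpow (by norm_num) hb
        _ ≤ (2 : ℝ) ^ ((4 / 3) : ℝ) * (a ^ ((4 : ℝ) / 3) + b ^ ((4 : ℝ) / 3)) := by
            have := Real.rpow_nonneg ha ((4 : ℝ) / 3)
            have h2 : (0:ℝ) < (2 : ℝ) ^ ((4 / 3) : ℝ) := Real.rpow_pos_of_pos two_pos _
            nlinarith
    rcases le_total v v' with h | h
    · exact key v v' hv hv' h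
    · have := key v' v hv' hv h
      rw [add_comm v' v, add_comm (v' ^ ((4 : ℝ) / 3))] at this
      exact this

/-- The differential sedimentation kernel
`K(v,v') = |v^{2/3} - v'^{2/3}| (v^{1/3} + v'^{1/3})²` satisfies Assumption A with
`γ = 4/3`, `h(v,v') = (v+v')^{4/3}`,
`g(x) = |x^{2/3} - (1-x)^{2/3}| (x^{1/3} + (1-x)^{1/3})²`, and moreover the bounds
`2^{-1/3}(v^{4/3}+v'^{4/3}) ≤ h(v,v') ≤ 2^{4/3}(v^{4/3}+v'^{4/3})` hold for all
`v, v' ≥ 0` and `(4/3)|x - 1/2| ≤ g(x) ≤ 4` for all `x ∈ [0,1]`. -/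
theorem sedimentation_kernel_satisfies_assumptionA :
    KernelAssumptionA
      (fun v v' => |v ^ ((2 : ℝ) / 3) - v' ^ ((2 : ℝ) / 3)| *
        (v ^ ((1 : ℝ) / 3) + v' ^ ((1 : ℝ) / 3)) ^ 2)
      (fun v v' => (v + v') ^ ((4 : ℝ) / 3))
      (fun x => |x ^ ((2 : ℝ) / 3) - (1 - x) ^ ((2 : ℝ) / 3)| *
        (x ^ ((1 : ℝ) / 3) + (1 - x) ^ ((1 : ℝ) / 3)) ^ 2)
      (4 / 3) 2 (2 ^ (-(1 / 3) : ℝ)) (2 ^ ((4 / 3) : ℝ)) (4 / 3) 4 1 ∧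
    (∀ v v' : ℝ, 0 ≤ v → 0 ≤ v' →
      (2 : ℝ) ^ (-(1 / 3) : ℝ) * (v ^ ((4 : ℝ) / 3) + v' ^ ((4 : ℝ) / 3)) ≤
          (v + v') ^ ((4 : ℝ) / 3) ∧
        (v + v') ^ ((4 : ℝ) / 3) ≤
          (2 : ℝ) ^ ((4 / 3) : ℝ) * (v ^ ((4 : ℝ) / 3) + v' ^ ((4 : ℝ) / 3))) ∧
    (∀ x ∈ Icc (0 : ℝ) 1,
      (4 / 3 : ℝ) * |x - 1 / 2| ≤
          |x ^ ((2 : ℝ) / 3) - (1 - x) ^ ((2 : ℝ) / 3)| *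
            (x ^ ((1 : ℝ) / 3) + (1 - x) ^ ((1 : ℝ) / 3)) ^ 2 ∧
        |x ^ ((2 : ℝ) / 3) - (1 - x) ^ ((2 : ℝ) / 3)| *
            (x ^ ((1 : ℝ) / 3) + (1 - x) ^ ((1 : ℝ) / 3)) ^ 2 ≤ 4) := by
  have c_rpow : ∀ q : ℝ, 0 ≤ q → Continuous (fun x : ℝ => x ^ q) := by
    intro q hq
    refine continuous_iff_continuousAt.2 fun x => ?_
    exact Real.continuousAt_rpow_const x q (Or.inr hq)
  refine ⟨?_, fun v v' hv hv' => sed_h_bounds v v' hv hv', fun x hx => sed_g_bounds x hx⟩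
  constructor
  · -- K_nonneg
    intro v v' _ _
    positivity
  · -- K_eq
    intro v v' hv hv' hs
    set s := v + v' with hs_def
    have hsne : s ≠ 0 := ne_of_gt hs
    have hvle : v ≤ s := by rw [hs_def]; linarith
    have hx1 : 1 - v / s = v' / s := by
      field_simp
      rw [hs_def]; ring
    simp only [hx1]
    rw [Real.div_rpow hv hs.le, Real.div_rpow hv' hs.le,
      Real.div_rpow hv hs.le, Real.div_rpow hv' hs.le, ← add_div,
      div_sub_div_same, div_pow, abs_div,
      abs_of_nonneg (Real.rpow_nonneg hs.le _)]
    have h13sq : (s ^ ((1 : ℝ) / 3)) ^ 2 = s ^ ((2 : ℝ) / 3) := (sed_sq s hs.le).symm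
    have hss : s ^ ((2 : ℝ) / 3) * s ^ ((2 : ℝ) / 3) = s ^ ((4 : ℝ) / 3) := by
      rw [← Real.rpow_add hs]; norm_num
    have h23ne : s ^ ((2 : ℝ) / 3) ≠ 0 := ne_of_gt (Real.rpow_pos_of_pos hs _)
    rw [h13sq]
    field_simp
    rw [← hss]; ring
  · -- h_cont
    exact (((c_rpow ((4 : ℝ) / 3) (by norm_num)).comp
      (continuous_fst.add continuous_snd)).continuousOn)
  · -- h_symm
    intro v v'; rw [add_comm]
  · norm_num
  · norm_num
  · exact Real.rpow_pos_of_pos two_pos _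
  · -- h_lower
    intro v v' hv hv' _
    exact (sed_h_bounds v v' hv hv').1
  · -- h_posOn
    intro R hR
    refine ⟨(2 / R) ^ ((4 : ℝ) / 3), Real.rpow_pos_of_pos (by positivity) _, ?_⟩
    intro v hv v' hv'
    refine Real.rpow_le_rpow (by positivity) ?_ (by norm_num)
    have h1 : 1 / R ≤ v := hv.1
    have h2 : 1 / R ≤ v' := hv'.1
    have : 2 / R = 1 / R + 1 / R := by ring
    linarith [this]
  · exact Real.rpow_pos_of_pos two_pos _
  · -- h_upper
    intro v v' hv hv'
    exact (sed_h_bounds v v' hv hv').2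
  · -- g_cont
    have c23 := c_rpow ((2 : ℝ) / 3) (by norm_num)
    have c13 := c_rpow ((1 : ℝ) / 3) (by norm_num)
    exact (((c23.sub (c23.comp (continuous_const.sub continuous_id))).abs).mul
      (((c13.add (c13.comp (continuous_const.sub continuous_id)))).pow 2)).continuousOn
  · -- g_symm
    intro x _
    have h : 1 - (1 - x) = x := by ring
    simp only [h]
    rw [abs_sub_comm, add_comm]
  · -- g_half
    norm_num
  · norm_num
  · norm_num
  · norm_num
  · -- g_lower
    intro x hx
    have := (sed_g_bounds x hx).1
    simpa using this
  · -- g_upper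
    intro x hx
    exact (sed_g_bounds x hx).2
end
end

section
/- Let p > 1, c > 0, 0 ≤ t₀ < T, and let y : [t₀,T] → [0,∞) be continuous with y(t) ≥ y(s) + c·∫_s^t y(τ)^p dτ for all t₀ ≤ s ≤ t ≤ T. Then for every t ∈ [t₀,T] with y(t) > 0 one has T − t ≤ y(t)^{1−p} / (c(p−1)). -/
open MeasureTheory Set

/-- Superlinear growth forces blow-up: if `y` is continuous,
nonnegative and satisfies `y(t) ≥ y(s) + c ∫_s^t y(τ)^p dτ` for `t₀ ≤ s ≤ t ≤ T`
with `p > 1`, then `T - t ≤ y(t)^{1-p} / (c (p-1))` whenever `y(t) > 0`. -/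
theorem superlinear_growth_time_bound
    (p c t₀ T : ℝ) (hp : 1 < p) (hc : 0 < c) (ht₀ : 0 ≤ t₀) (hT : t₀ < T)
    (y : ℝ → ℝ) (hyc : ContinuousOn y (Icc t₀ T))
    (hynn : ∀ t ∈ Icc t₀ T, 0 ≤ y t)
    (hgrow : ∀ s t : ℝ, t₀ ≤ s → s ≤ t → t ≤ T →
      y s + c * ∫ τ in s..t, (y τ) ^ p ≤ y t) :
    ∀ t ∈ Icc t₀ T, 0 < y t → T - t ≤ (y t) ^ (1 - p) / (c * (p - 1)) := by
  intro t ht hyt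
  by_contra hcon
  push_neg at hcon
  have hp1 : (0:ℝ) < p - 1 := by linarith
  set K := c * (p - 1) with hKdef
  have hK0 : 0 < K := mul_pos hc hp1
  have hmP : 0 < y t ^ (1 - p) := Real.rpow_pos_of_pos hyt _
  have hlt : y t ^ (1 - p) < (T - t) * K := by
    rw [div_lt_iff₀ hK0] at hcon; linarith
  set A := (y t ^ (1 - p) + (T - t) * K) / 2 with hAdef
  have hA1 : y t ^ (1 - p) < A := by rw [hAdef]; linarith
  have hA2 : A < (T - t) * K := by rw [hAdef]; linarith
  have hA0 : 0 < A := hmP.trans hA1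
  -- a uniform bound for y
  obtain ⟨x, hx, hxmax⟩ := isCompact_Icc.exists_isMaxOn ⟨t, ht⟩ hyc
  set M := max (y x) 1 with hMdef
  have hM1 : (1:ℝ) ≤ M := le_max_right _ _
  have hM0 : (0:ℝ) < M := lt_of_lt_of_le one_pos hM1
  have hyM : ∀ u ∈ Icc t₀ T, y u ≤ M := fun u hu => (hxmax hu).trans (le_max_left _ _)
  set q := 1 / (p - 1) with hqdef
  have hq0 : 0 < q := by rw [hqdef]; positivity
  have hMP : 0 < M ^ (1 - p) := Real.rpow_pos_of_pos hM0 _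
  set δ := min (M ^ (1 - p)) A / 2 with hδdef
  have hmin : 0 < min (M ^ (1 - p)) A := lt_min hMP hA0
  have hδ0 : 0 < δ := by rw [hδdef]; linarith
  have hδA : δ < A := by
    have : min (M ^ (1 - p)) A ≤ A := min_le_right _ _
    rw [hδdef]; linarith
  have hδM : δ < M ^ (1 - p) := by
    have : min (M ^ (1 - p)) A ≤ M ^ (1 - p) := min_le_left _ _
    rw [hδdef]; linarith
  set b := t + (A - δ) / K with hbdef
  have htb : t < b := by
    rw [hbdef]
    have : 0 < (A - δ) / K := div_pos (by linarith) hK0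
    linarith
  have hbT : b < T := by
    have h1 : (A - δ) / K < (T - t) := by
      rw [div_lt_iff₀ hK0]; linarith
    rw [hbdef]; linarith
  have htt₀ : t₀ ≤ t := ht.1
  have hsub : Icc t b ⊆ Icc t₀ T := Icc_subset_Icc htt₀ hbT.le
  -- the comparison function ψ
  set f : ℝ → ℝ := fun u => A - K * (u - t) with hfdef
  set ψ : ℝ → ℝ := fun u => f u ^ (-q) with hψdef
  have hfpos : ∀ u ∈ Icc t b, δ ≤ f u := by
    intro u hu
    have : K * (u - t) ≤ K * (b - t) := by
      apply mul_le_mul_of_nonneg_left (by linarith [hu.2]) hK0.le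
    have hb' : K * (b - t) = A - δ := by
      rw [hbdef]; field_simp; ring
    simp only [hfdef]; linarith
  have hψpos : ∀ u ∈ Icc t b, 0 < ψ u := by
    intro u hu
    exact Real.rpow_pos_of_pos (lt_of_lt_of_le hδ0 (hfpos u hu)) _
  -- continuity of ψ and ψ^p on Icc t b
  have hfc : ContinuousOn f (Icc t b) := by
    have : Continuous f := by rw [hfdef]; fun_prop
    exact this.continuousOn
  have hψc : ContinuousOn ψ (Icc t b) :=
    hfc.rpow_const (fun u hu => Or.inl (ne_of_gt (lt_of_lt_of_le hδ0 (hfpos u hu))))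
  have hψpc : ContinuousOn (fun u => c * ψ u ^ p) (Icc t b) :=
    continuousOn_const.mul (hψc.rpow_const (fun u hu => Or.inl (ne_of_gt (hψpos u hu))))
  -- derivative of ψ
  have hderiv : ∀ u ∈ Icc t b, HasDerivAt ψ (c * ψ u ^ p) u := by
    intro u hu
    have hfu : 0 < f u := lt_of_lt_of_le hδ0 (hfpos u hu)
    have hf' : HasDerivAt f (-K) u := by
      have : HasDerivAt (fun v : ℝ => K * (v - t)) K u := by
        simpa using ((hasDerivAt_id u).sub_const t).const_mul K
      simpa using this.const_sub A
    have h1 : HasDerivAt ψ ((-K) * (-q) * f u ^ (-q - 1)) u :=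
      hf'.rpow_const (Or.inl hfu.ne')
    have h2 : (-K) * (-q) * f u ^ (-q - 1) = c * ψ u ^ p := by
      have hψp : ψ u ^ p = f u ^ (-q - 1) := by
        rw [hψdef]
        rw [← Real.rpow_mul hfu.le]
        congr 1
        rw [hqdef]; field_simp; ring
      rw [hψp, hKdef, hqdef]
      field_simp
    rwa [h2] at h1
  -- FTC for ψ
  have hFTC : ∀ v ∈ Icc t b, ψ v = ψ t + c * ∫ τ in t..v, ψ τ ^ p := by
    intro v hv
    have huIcc : uIcc t v ⊆ Icc t b := by
      rw [uIcc_of_le hv.1]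
      exact Icc_subset_Icc le_rfl hv.2
    have hint : IntervalIntegrable (fun u => c * ψ u ^ p) volume t v :=
      (hψpc.mono huIcc).intervalIntegrable
    have := intervalIntegral.integral_eq_sub_of_hasDerivAt
      (fun u hu => hderiv u (huIcc hu)) hint
    rw [intervalIntegral.integral_const_mul] at this
    linarith [this]
  -- ψ t < y t
  have hψt : ψ t < y t := by
    have hft : f t = A := by simp [hfdef]
    have h1 : ψ t = A ^ (-q) := by show f t ^ (-q) = A ^ (-q); rw [hft]
    have h2 : (y t ^ (1 - p)) ^ (-q) = y t := by
      rw [← Real.rpow_mul hyt.le]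
      rw [show (1 - p) * (-q) = 1 by rw [hqdef]; field_simp; ring]
      exact Real.rpow_one _
    rw [h1, ← h2]
    exact Real.rpow_lt_rpow_of_neg hmP hA1 (by linarith)
  -- ψ b > M
  have hψb : M < ψ b := by
    have hfb : f b = δ := by
      simp only [hfdef, hbdef]
      field_simp
      ring
    have h2 : (M ^ (1 - p)) ^ (-q) = M := by
      rw [← Real.rpow_mul hM0.le]
      rw [show (1 - p) * (-q) = 1 by rw [hqdef]; field_simp; ring]
      exact Real.rpow_one _
    rw [hψdef]
    simp only
    rw [hfb, ← h2]
    exact Real.rpow_lt_rpow_of_neg hδ0 hδM (by linarith)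
  -- main claim: ψ ≤ y on Icc t b
  have hclaim : ∀ u ∈ Icc t b, ψ u ≤ y u := by
    by_contra hbad
    push_neg at hbad
    set S := {u ∈ Icc t b | y u < ψ u} with hSdef
    have hSne : S.Nonempty := by
      obtain ⟨u, hu1, hu2⟩ := hbad
      exact ⟨u, hu1, hu2⟩
    have hSbdd : BddBelow S := ⟨t, fun u hu => hu.1.1⟩
    set w := sInf S with hwdef
    have hwmem : w ∈ Icc t b := by
      constructor
      · exact le_csInf hSne (fun u hu => hu.1.1)
      · obtain ⟨u, hu⟩ := hSne
        exact (csInf_le hSbdd hu).trans hu.1.2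
    -- y w ≤ ψ w via a sequence in S tending to w
    have hyw : y w ≤ ψ w := by
      obtain ⟨u, hmono, hu_tend, hu_mem⟩ := exists_seq_tendsto_sInf hSne hSbdd
      have hu_in : ∀ n, u n ∈ Icc t b := fun n => (hu_mem n).1
      have h1 : Filter.Tendsto u Filter.atTop (nhdsWithin w (Icc t b)) :=
        tendsto_nhdsWithin_of_tendsto_nhds_of_eventually_within u hu_tend
          (Filter.Eventually.of_forall hu_in)
      have hyw' : Filter.Tendsto (y ∘ u) Filter.atTop (nhds (y w)) :=
        ((hyc.mono hsub) w hwmem).tendsto.comp h1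
      have hψw' : Filter.Tendsto (ψ ∘ u) Filter.atTop (nhds (ψ w)) :=
        (hψc w hwmem).tendsto.comp h1
      exact le_of_tendsto_of_tendsto' hyw' hψw' (fun n => (hu_mem n).2.le)
    -- ψ ≤ y on Ico t w
    have hgood : ∀ u ∈ Ico t w, ψ u ≤ y u := by
      intro u hu
      by_contra h
      push_neg at h
      have huS : u ∈ S := ⟨⟨hu.1, hu.2.le.trans hwmem.2⟩, h⟩
      exact absurd (csInf_le hSbdd huS) (not_le.mpr hu.2)
    -- compare integrals
    have htw : t ≤ w := hwmem.1
    have hwT : w ≤ T := hwmem.2.trans hbT.le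
    have hint1 : IntervalIntegrable (fun τ => ψ τ ^ p) volume t w := by
      have : ContinuousOn (fun τ => ψ τ ^ p) (Icc t b) :=
        hψc.rpow_const (fun u hu => Or.inl (ne_of_gt (hψpos u hu)))
      exact (this.mono (by rw [uIcc_of_le htw]; exact Icc_subset_Icc le_rfl hwmem.2)).intervalIntegrable
    have hint2 : IntervalIntegrable (fun τ => y τ ^ p) volume t w := by
      have : ContinuousOn (fun τ => y τ ^ p) (Icc t₀ T) := by
        apply ContinuousOn.rpow_const hyc
        intro u hu
        right; linarith
      exact (this.mono (by rw [uIcc_of_le htw]; exact Icc_subset_Icc htt₀ hwT)).intervalIntegrable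
    have hae : (fun τ => ψ τ ^ p) ≤ᵐ[volume.restrict (Icc t w)] (fun τ => y τ ^ p) := by
      have h1 : ∀ᵐ τ ∂(volume.restrict (Icc t w)), τ ∈ Icc t w :=
        ae_restrict_mem measurableSet_Icc
      have h2 : ∀ᵐ τ ∂(volume.restrict (Icc t w)), τ ≠ w := by
        refine (ae_iff).2 ?_
        have : {a : ℝ | ¬ a ≠ w} = {w} := by ext a; simp
        rw [this]
        exact le_antisymm ((Measure.restrict_le_self {w}).trans_eq (Real.volume_singleton)) (zero_le)
      filter_upwards [h1, h2] with τ hτ hne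
      have hτ' : τ ∈ Ico t w := ⟨hτ.1, lt_of_le_of_ne hτ.2 hne⟩
      have hτb : τ ∈ Icc t b := ⟨hτ'.1, hτ'.2.le.trans hwmem.2⟩
      exact Real.rpow_le_rpow (hψpos τ hτb).le (hgood τ hτ') (by linarith)
    have hintle : (∫ τ in t..w, ψ τ ^ p) ≤ ∫ τ in t..w, y τ ^ p :=
      intervalIntegral.integral_mono_ae_restrict htw hint1 hint2 hae
    -- contradiction
    have hgr := hgrow t w htt₀ htw hwT
    have hFw := hFTC w hwmem
    nlinarith [mul_le_mul_of_nonneg_left hintle hc.le]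
  -- final contradiction
  have h1 : ψ b ≤ y b := hclaim b ⟨htb.le, le_rfl⟩
  have h2 : y b ≤ M := hyM b (hsub ⟨htb.le, le_rfl⟩)
  linarith
end

section
/- Let K : [0,∞)×[0,∞) → [0,∞) be continuous, symmetric, and satisfy K(v,v') ≤ C(v^γ + v'^γ) for all v,v' ≥ 0, for some constants C > 0 and γ > 1. Let T > 0 and let f be a weak solution of the coagulation equation on [0,T] with kernel K and initial datum f_in, where ∫ v f_in(dv) < ∞. Then f is mass-conserving: ∫ v f(dv,t) = ∫ v f_in(dv) for all t ∈ [0,T]. -/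
open MeasureTheory Set Filter Topology

noncomputable section

/-- Cutoff approximation of the identity: `cutf n v = max (min v (2(n+1) - v) - 1/(n+1)) 0`. -/
def cutf (n : ℕ) (v : ℝ) : ℝ := max (min v (2 * ((n : ℝ) + 1) - v) - 1 / ((n : ℝ) + 1)) 0

lemma cutf_continuous (n : ℕ) : Continuous (cutf n) := by
  unfold cutf
  exact (((continuous_id.min (continuous_const.sub continuous_id)).sub continuous_const).max
    continuous_const)

lemma cutf_nonneg (n : ℕ) (v : ℝ) : 0 ≤ cutf n v := le_max_right _ _

lemma cutf_le (n : ℕ) (v : ℝ) (hv : 0 ≤ v) : cutf n v ≤ v := by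
  unfold cutf
  have h1 : min v (2 * ((n : ℝ) + 1) - v) - 1 / ((n : ℝ) + 1) ≤ v := by
    have : min v (2 * ((n : ℝ) + 1) - v) ≤ v := min_le_left _ _
    have hpos : 0 < 1 / ((n : ℝ) + 1) := by positivity
    linarith
  exact max_le h1 hv

lemma cutf_lip (n : ℕ) (x y : ℝ) : |cutf n x - cutf n y| ≤ |x - y| := by
  unfold cutf
  calc |max (min x (2 * ((n : ℝ) + 1) - x) - 1 / ((n : ℝ) + 1)) 0 -
        max (min y (2 * ((n : ℝ) + 1) - y) - 1 / ((n : ℝ) + 1)) 0|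
      ≤ |(min x (2 * ((n : ℝ) + 1) - x) - 1 / ((n : ℝ) + 1)) -
        (min y (2 * ((n : ℝ) + 1) - y) - 1 / ((n : ℝ) + 1))| := abs_max_sub_max_le_abs _ _ _
    _ = |min x (2 * ((n : ℝ) + 1) - x) - min y (2 * ((n : ℝ) + 1) - y)| := by ring_nf
    _ ≤ max |x - y| |(2 * ((n : ℝ) + 1) - x) - (2 * ((n : ℝ) + 1) - y)| :=
        abs_min_sub_min_le_max _ _ _ _
    _ ≤ |x - y| := by
        apply max_le le_rfl
        have : (2 * ((n : ℝ) + 1) - x) - (2 * ((n : ℝ) + 1) - y) = -(x - y) := by ring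
        rw [this, abs_neg]

lemma cutf_support (n : ℕ) (v : ℝ)
    (hv : v ∉ Icc (1 / ((n : ℝ) + 1)) (2 * ((n : ℝ) + 1))) : cutf n v = 0 := by
  have hn : (0 : ℝ) < (n : ℝ) + 1 := by positivity
  have h1 : (1 : ℝ) / ((n : ℝ) + 1) ≤ 1 := by
    rw [div_le_one hn]; linarith [Nat.cast_nonneg (α := ℝ) n]
  rw [mem_Icc, not_and_or] at hv
  unfold cutf
  rcases hv with hv | hv
  · push_neg at hv
    have : min v (2 * ((n : ℝ) + 1) - v) - 1 / ((n : ℝ) + 1) ≤ 0 := by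
      have : min v (2 * ((n : ℝ) + 1) - v) ≤ v := min_le_left _ _
      linarith
    exact max_eq_right this
  · push_neg at hv
    have : min v (2 * ((n : ℝ) + 1) - v) - 1 / ((n : ℝ) + 1) ≤ 0 := by
      have h2 : min v (2 * ((n : ℝ) + 1) - v) ≤ 2 * ((n : ℝ) + 1) - v := min_le_right _ _
      have h3 : 0 < 1 / ((n : ℝ) + 1) := by positivity
      linarith
    exact max_eq_right this

lemma cutf_eventually_eq (v : ℝ) (hv : 0 < v) :
    ∀ᶠ n : ℕ in atTop, cutf n v = v - 1 / ((n : ℝ) + 1) := by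
  obtain ⟨N, hN⟩ := exists_nat_ge (max v (1 / v))
  filter_upwards [eventually_ge_atTop N] with n hn
  have hn1 : (0 : ℝ) < (n : ℝ) + 1 := by positivity
  have hNn : (N : ℝ) ≤ (n : ℝ) := Nat.cast_le.2 hn
  have hv1 : v ≤ (n : ℝ) + 1 := by
    have := le_trans (le_max_left v (1/v)) hN; linarith
  have hv2 : 1 / ((n : ℝ) + 1) ≤ v := by
    have h1 : 1 / v ≤ (n : ℝ) + 1 := by
      have := le_trans (le_max_right v (1/v)) hN; linarith
    rw [div_le_iff₀ hn1]
    rw [div_le_iff₀ hv] at h1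
    nlinarith
  unfold cutf
  have hmin : min v (2 * ((n : ℝ) + 1) - v) = v := min_eq_left (by linarith)
  rw [hmin]
  exact max_eq_left (by linarith [one_div_pos.2 hn1])

lemma cutf_tendsto (v : ℝ) (hv : 0 < v) :
    Tendsto (fun n : ℕ => cutf n v) atTop (𝓝 v) := by
  have h : Tendsto (fun n : ℕ => v - 1 / ((n : ℝ) + 1)) atTop (𝓝 (v - 0)) :=
    tendsto_const_nhds.sub tendsto_one_div_add_atTop_nhds_zero_nat
  rw [sub_zero] at h
  exact h.congr' ((cutf_eventually_eq v hv).mono fun n hn => hn.symm)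

lemma cutf_delta_bound (n : ℕ) (x y : ℝ) (hx : 0 ≤ x) (hy : 0 ≤ y) :
    |cutf n (x + y) - cutf n x - cutf n y| ≤ 2 * min x y := by
  rcases le_total x y with h | h
  · have h1 : |cutf n (x + y) - cutf n y| ≤ |x| := by
      have := cutf_lip n (x + y) y
      simpa using this
    have h2 : |cutf n x| ≤ x := by
      rw [abs_of_nonneg (cutf_nonneg n x)]; exact cutf_le n x hx
    rw [min_eq_left h]
    calc |cutf n (x + y) - cutf n x - cutf n y|
        = |(cutf n (x + y) - cutf n y) - cutf n x| := by ring_nf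
      _ ≤ |cutf n (x + y) - cutf n y| + |cutf n x| := abs_sub _ _
      _ ≤ |x| + x := add_le_add h1 h2
      _ = 2 * x := by rw [abs_of_nonneg hx]; ring
  · have h1 : |cutf n (x + y) - cutf n x| ≤ |y| := by
      have := cutf_lip n (x + y) x
      simpa using this
    have h2 : |cutf n y| ≤ y := by
      rw [abs_of_nonneg (cutf_nonneg n y)]; exact cutf_le n y hy
    rw [min_eq_right h]
    calc |cutf n (x + y) - cutf n x - cutf n y|
        = |(cutf n (x + y) - cutf n x) - cutf n y| := by ring_nf
      _ ≤ |cutf n (x + y) - cutf n x| + |cutf n y| := abs_sub _ _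
      _ ≤ |y| + y := add_le_add h1 h2
      _ = 2 * y := by rw [abs_of_nonneg hy]; ring

lemma cutf_delta_tendsto (x y : ℝ) (hx : 0 < x) (hy : 0 < y) :
    Tendsto (fun n : ℕ => cutf n (x + y) - cutf n x - cutf n y) atTop (𝓝 0) := by
  have h := ((cutf_tendsto (x + y) (by linarith)).sub (cutf_tendsto x hx)).sub
    (cutf_tendsto y hy)
  simpa using h

lemma ae_pos_of_conc {μ : Measure ℝ} (hμ0 : μ (Iic 0) = 0) : ∀ᵐ v ∂μ, 0 < v := by
  rw [ae_iff]
  convert hμ0 using 2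
  ext v; simp [not_lt]

lemma rpow_continuous {γ : ℝ} (hγ : 1 < γ) : Continuous fun v : ℝ => v ^ γ :=
  continuous_iff_continuousAt.2 fun x =>
    Real.continuousAt_rpow_const x γ (Or.inr (by linarith))

lemma le_one_add_rpow {γ : ℝ} (hγ : 1 < γ) {v : ℝ} (hv : 0 < v) : v ≤ 1 + v ^ γ := by
  rcases le_total v 1 with h | h
  · have : (0:ℝ) ≤ v ^ γ := Real.rpow_nonneg hv.le γ
    linarith
  · have h1 : v ^ (1:ℝ) ≤ v ^ γ := Real.rpow_le_rpow_of_exponent_le h hγ.le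
    rw [Real.rpow_one] at h1
    linarith

lemma integrable_facts {γ : ℝ} (hγ : 1 < γ) {μ : Measure ℝ} (hμ0 : μ (Iic 0) = 0)
    (hint : Integrable (fun v => 1 + v ^ γ) μ) :
    IsFiniteMeasure μ ∧ Integrable (fun v => v ^ γ) μ ∧ Integrable (fun v => v) μ := by
  have ae_pos := ae_pos_of_conc hμ0
  refine ⟨?_, ?_, ?_⟩
  · have h1 : Integrable (fun _ : ℝ => (1:ℝ)) μ := by
      refine hint.mono' aestronglyMeasurable_const ?_
      filter_upwards [ae_pos] with v hv
      have : (0:ℝ) ≤ v ^ γ := Real.rpow_nonneg hv.le γ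
      rw [Real.norm_eq_abs, abs_one]; linarith
    rcases integrable_const_iff.mp h1 with h | h
    · exact absurd h one_ne_zero
    · exact h
  · refine hint.mono' (rpow_continuous hγ).aestronglyMeasurable ?_
    filter_upwards [ae_pos] with v hv
    have : (0:ℝ) ≤ v ^ γ := Real.rpow_nonneg hv.le γ
    rw [Real.norm_eq_abs, abs_of_nonneg this]; linarith
  · refine hint.mono' aestronglyMeasurable_id ?_
    filter_upwards [ae_pos] with v hv
    rw [Real.norm_eq_abs, abs_of_nonneg hv.le]
    exact le_one_add_rpow hγ hv

lemma cutf_integral_tendsto {γ : ℝ} (hγ : 1 < γ) {μ : Measure ℝ} (hμ0 : μ (Iic 0) = 0)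
    (hint : Integrable (fun v => 1 + v ^ γ) μ) :
    Tendsto (fun n : ℕ => ∫ v, cutf n v ∂μ) atTop (𝓝 (∫ v, v ∂μ)) := by
  have ae_pos := ae_pos_of_conc hμ0
  refine tendsto_integral_of_dominated_convergence (fun v => 1 + v ^ γ)
    (fun n => (cutf_continuous n).aestronglyMeasurable) hint ?_ ?_
  · intro n
    filter_upwards [ae_pos] with v hv
    rw [Real.norm_eq_abs, abs_of_nonneg (cutf_nonneg _ _)]
    exact le_trans (cutf_le n v hv.le) (le_one_add_rpow hγ hv)
  · filter_upwards [ae_pos] with v hv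
    exact cutf_tendsto v hv

lemma kernel_delta_bound {K : ℝ → ℝ → ℝ} {γ C : ℝ} (hC : 0 < C)
    (hKnn : ∀ v v', 0 ≤ v → 0 ≤ v' → 0 ≤ K v v')
    (hKub : ∀ v v', 0 ≤ v → 0 ≤ v' → K v v' ≤ C * (v ^ γ + v' ^ γ))
    (n : ℕ) {v v' : ℝ} (hv : 0 < v) (hv' : 0 < v') :
    ‖K v v' * (cutf n (v + v') - cutf n v - cutf n v')‖ ≤
      2 * C * (v ^ γ * v' + v * v' ^ γ) := by
  have hK0 := hKnn v v' hv.le hv'.le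
  have hKle := hKub v v' hv.le hv'.le
  have habs := cutf_delta_bound n v v' hv.le hv'.le
  have ha : (0:ℝ) ≤ v ^ γ := Real.rpow_nonneg hv.le γ
  have hb : (0:ℝ) ≤ v' ^ γ := Real.rpow_nonneg hv'.le γ
  have h1 : min v v' ≤ v := min_le_left _ _
  have h2 : min v v' ≤ v' := min_le_right _ _
  have h3 : 0 ≤ min v v' := le_min hv.le hv'.le
  rw [Real.norm_eq_abs, abs_mul, abs_of_nonneg hK0]
  calc K v v' * |cutf n (v + v') - cutf n v - cutf n v'|
      ≤ (C * (v ^ γ + v' ^ γ)) * (2 * min v v') :=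
        mul_le_mul hKle habs (abs_nonneg _) (by positivity)
    _ ≤ 2 * C * (v ^ γ * v' + v * v' ^ γ) := by
        have p1 : v ^ γ * min v v' ≤ v ^ γ * v' := mul_le_mul_of_nonneg_left h2 ha
        have p2 : v' ^ γ * min v v' ≤ v' ^ γ * v := mul_le_mul_of_nonneg_left h1 hb
        nlinarith

lemma coag_key (K : ℝ → ℝ → ℝ) (γ C C' : ℝ) (hγ : 1 < γ) (hC : 0 < C)
    (hKc : ContinuousOn (fun p : ℝ × ℝ => K p.1 p.2) (Ici 0 ×ˢ Ici 0))
    (hKnn : ∀ v v', 0 ≤ v → 0 ≤ v' → 0 ≤ K v v')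
    (hKub : ∀ v v', 0 ≤ v → 0 ≤ v' → K v v' ≤ C * (v ^ γ + v' ^ γ))
    (μ : Measure ℝ) (hμ0 : μ (Iic 0) = 0)
    (hint : Integrable (fun v => 1 + v ^ γ) μ)
    (hC' : (∫ v, (1 + v ^ γ) ∂μ) ≤ C') :
    (∀ n : ℕ, |∫ v, ∫ v', K v v' * (cutf n (v + v') - cutf n v - cutf n v') ∂μ ∂μ|
      ≤ 4 * C * C' * C') ∧
    Tendsto (fun n : ℕ =>
      ∫ v, ∫ v', K v v' * (cutf n (v + v') - cutf n v - cutf n v') ∂μ ∂μ) atTop (𝓝 0) := by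
  obtain ⟨hfin, intγ, int1⟩ := integrable_facts hγ hμ0 hint
  haveI := hfin
  have ae_pos := ae_pos_of_conc hμ0
  -- moments
  have hMγnn : 0 ≤ ∫ v, v ^ γ ∂μ := by
    refine integral_nonneg_of_ae ?_
    filter_upwards [ae_pos] with v hv
    exact Real.rpow_nonneg hv.le γ
  have hM1nn : 0 ≤ ∫ v, v ∂μ := by
    refine integral_nonneg_of_ae ?_
    filter_upwards [ae_pos] with v hv
    exact hv.le
  have hMγ : (∫ v, v ^ γ ∂μ) ≤ C' := by
    refine le_trans (integral_mono_ae intγ hint (ae_of_all μ fun v => by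
      show v ^ γ ≤ 1 + v ^ γ
      linarith)) hC'
  have hM1 : (∫ v, v ∂μ) ≤ C' := by
    refine le_trans (integral_mono_ae int1 hint ?_) hC'
    filter_upwards [ae_pos] with v hv
    exact le_one_add_rpow hγ hv
  -- the product-space setup
  set G : ℕ → ℝ × ℝ → ℝ := fun n p =>
    K p.1 p.2 * (cutf n (p.1 + p.2) - cutf n p.1 - cutf n p.2) with hG
  set W : ℝ × ℝ → ℝ := fun p => 2 * C * (p.1 ^ γ * p.2 + p.1 * p.2 ^ γ) with hW
  have hSmeas : MeasurableSet (Ioi (0:ℝ) ×ˢ Ioi (0:ℝ)) :=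
    measurableSet_Ioi.prod measurableSet_Ioi
  have hSae : ∀ᵐ p ∂(μ.prod μ), p ∈ Ioi (0:ℝ) ×ˢ Ioi (0:ℝ) := by
    rw [ae_iff]
    refine measure_mono_null (fun p hp => ?_)
      (?_ : (μ.prod μ) ((Iic 0 ×ˢ univ) ∪ (univ ×ˢ Iic 0)) = 0)
    · simp only [mem_setOf_eq, mem_prod, mem_Ioi, not_and_or, not_lt] at hp
      rcases hp with h | h
      · exact Or.inl (by simp [h])
      · exact Or.inr (by simp [h])
    · refine measure_union_null ?_ ?_ <;>
        rw [Measure.prod_prod] <;> simp [hμ0]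
  have hGm : ∀ n : ℕ, AEStronglyMeasurable (G n) (μ.prod μ) := by
    intro n
    have hKS : ContinuousOn (fun p : ℝ × ℝ => K p.1 p.2) (Ioi (0:ℝ) ×ˢ Ioi (0:ℝ)) :=
      hKc.mono (prod_mono Ioi_subset_Ici_self Ioi_subset_Ici_self)
    have hΔ : Continuous fun p : ℝ × ℝ => cutf n (p.1 + p.2) - cutf n p.1 - cutf n p.2 :=
      (((cutf_continuous n).comp (continuous_fst.add continuous_snd)).sub
        ((cutf_continuous n).comp continuous_fst)).sub
        ((cutf_continuous n).comp continuous_snd)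
    have hGc : ContinuousOn (G n) (Ioi (0:ℝ) ×ˢ Ioi (0:ℝ)) := hKS.mul hΔ.continuousOn
    have := hGc.aestronglyMeasurable (μ := μ.prod μ) hSmeas
    rwa [Measure.restrict_eq_self_of_ae_mem hSae] at this
  have hWint : Integrable W (μ.prod μ) :=
    ((intγ.mul_prod int1).add (int1.mul_prod intγ)).const_mul (2 * C)
  have hGW : ∀ n : ℕ, ∀ᵐ p ∂(μ.prod μ), ‖G n p‖ ≤ W p := by
    intro n
    filter_upwards [hSae] with p hp
    exact kernel_delta_bound hC hKnn hKub n hp.1 hp.2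
  have hGint : ∀ n : ℕ, Integrable (G n) (μ.prod μ) :=
    fun n => hWint.mono' (hGm n) (hGW n)
  have hEq : ∀ n : ℕ,
      (∫ v, ∫ v', K v v' * (cutf n (v + v') - cutf n v - cutf n v') ∂μ ∂μ) =
        ∫ p, G n p ∂(μ.prod μ) :=
    fun n => integral_integral (hGint n)
  constructor
  · intro n
    rw [hEq n, ← Real.norm_eq_abs]
    calc ‖∫ p, G n p ∂(μ.prod μ)‖ ≤ ∫ p, W p ∂(μ.prod μ) :=
          le_trans (norm_integral_le_integral_norm _)
            (integral_mono_ae (hGint n).norm hWint (hGW n))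
      _ = 2 * C * ((∫ v, v ^ γ ∂μ) * (∫ v, v ∂μ) + (∫ v, v ∂μ) * (∫ v, v ^ γ ∂μ)) := by
          rw [hW]
          simp only
          rw [integral_const_mul]
          rw [integral_add (intγ.mul_prod int1) (int1.mul_prod intγ)]
          rw [integral_prod_mul (fun v : ℝ => v ^ γ) (fun v : ℝ => v),
            integral_prod_mul (fun v : ℝ => v) (fun v : ℝ => v ^ γ)]
      _ ≤ 4 * C * C' * C' := by
          have hp : (∫ v, v ^ γ ∂μ) * (∫ v, v ∂μ) ≤ C' * C' :=
            mul_le_mul hMγ hM1 hM1nn (hMγnn.trans hMγ)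
          nlinarith [hC.le]
  · have h := tendsto_integral_of_dominated_convergence (μ := μ.prod μ)
      (F := G) (f := fun _ => (0:ℝ)) W hGm hWint hGW ?_
    · rw [integral_zero] at h
      exact h.congr fun n => (hEq n).symm
    · filter_upwards [hSae] with p hp
      have := (cutf_delta_tendsto p.1 p.2 hp.1 hp.2).const_mul (K p.1 p.2)
      simpa using this
/-- The double flux integral appearing in the weak formulation, for `φ = cutf n`. -/
def coagD (K : ℝ → ℝ → ℝ) (f : ℝ → Measure ℝ) (n : ℕ) (s : ℝ) : ℝ :=
  ∫ v, (∫ v', K v v' * (cutf n (v + v') - cutf n v - cutf n v') ∂(f s)) ∂(f s)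

/-- For a continuous symmetric kernel bounded by
`C(v^γ + v'^γ)` with `γ > 1`, every weak solution with initial datum of finite mass
is mass-conserving. -/
theorem weak_solution_is_mass_conserving
    (K : ℝ → ℝ → ℝ) (γ C T : ℝ) (hγ : 1 < γ) (hC : 0 < C) (hT : 0 < T)
    (hKc : ContinuousOn (fun p : ℝ × ℝ => K p.1 p.2) (Ici 0 ×ˢ Ici 0))
    (hKs : ∀ v v', K v v' = K v' v)
    (hKnn : ∀ v v', 0 ≤ v → 0 ≤ v' → 0 ≤ K v v')
    (hKub : ∀ v v', 0 ≤ v → 0 ≤ v' → K v v' ≤ C * (v ^ γ + v' ^ γ))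
    (fin : Measure ℝ) (hconc : fin (Iic 0) = 0)
    (hγmom : Integrable (fun v => 1 + v ^ γ) fin)
    (hmass : Integrable (fun v => v) fin)
    (f : ℝ → Measure ℝ) (hf : IsWeakSolution K γ T f fin) :
    IsMassConserving T f fin := by
  obtain ⟨C', hC'⟩ := hf.moment_bound
  refine ⟨hmass, fun t ht => ?_⟩
  have ht0 : (0:ℝ) ≤ t := ht.1
  have hmom_t := hC' t ht
  have int_t : Integrable (fun v => v) (f t) :=
    (integrable_facts hγ (hf.conc t ht) hmom_t.1).2.2
  refine ⟨int_t, ?_⟩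
  -- limits of the truncated masses
  have hLt : Tendsto (fun n : ℕ => ∫ v, cutf n v ∂(f t)) atTop (𝓝 (∫ v, v ∂(f t))) :=
    cutf_integral_tendsto hγ (hf.conc t ht) hmom_t.1
  have hLin : Tendsto (fun n : ℕ => ∫ v, cutf n v ∂fin) atTop (𝓝 (∫ v, v ∂fin)) :=
    cutf_integral_tendsto hγ hconc hγmom
  -- the weak formulation applied to the cutoffs
  have hweak : ∀ n : ℕ, (∫ v, cutf n v ∂(f t)) - (∫ v, cutf n v ∂fin) =
      (1 / 2) * ∫ s in (0:ℝ)..t, coagD K f n s := by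
    intro n
    have hsupp : ∀ x, x ∉ Icc (1 / ((n:ℝ)+1)) (2*((n:ℝ)+1)) → cutf n x = 0 :=
      fun x hx => cutf_support n x hx
    have hCS : HasCompactSupport (cutf n) :=
      HasCompactSupport.intro isCompact_Icc hsupp
    have hts : tsupport (cutf n) ⊆ Ioi 0 := by
      have h1 : tsupport (cutf n) ⊆ Icc (1/((n:ℝ)+1)) (2*((n:ℝ)+1)) := by
        apply closure_minimal ?_ isClosed_Icc
        intro x hx
        by_contra hxx
        exact hx (cutf_support n x hxx)
      refine h1.trans fun x hx => ?_
      have hp : (0:ℝ) < 1/((n:ℝ)+1) := by positivity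
      exact lt_of_lt_of_le hp hx.1
    exact hf.weak_form (cutf n) (cutf_continuous n) hCS hts t ht
  set c : ℕ → ℝ := fun n => ∫ s in (0:ℝ)..t, coagD K f n s with hcdef
  have hc2 : ∀ n, c n = 2 * ((∫ v, cutf n v ∂(f t)) - ∫ v, cutf n v ∂fin) := by
    intro n; rw [hweak n]; ring
  set L : ℝ := (∫ v, v ∂(f t)) - ∫ v, v ∂fin with hLdef
  have hctend : Tendsto c atTop (𝓝 (2 * L)) :=
    (((hLt.sub hLin).const_mul 2).congr fun n => (hc2 n).symm)
  -- the per-time-s bounds from the key lemma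
  have hkey : ∀ s ∈ Icc (0:ℝ) T, (∀ n : ℕ, |coagD K f n s| ≤ 4 * C * C' * C') ∧
      Tendsto (fun n : ℕ => coagD K f n s) atTop (𝓝 0) := by
    intro s hs
    exact coag_key K γ C C' hγ hC hKc hKnn hKub (f s) (hf.conc s hs) (hC' s hs).1 (hC' s hs).2
  have hmain : 2 * L = 0 := by
    by_cases hfreq : ∃ᶠ n in atTop, ¬ IntervalIntegrable (coagD K f n) volume 0 t
    · obtain ⟨ψ, hψmono, hψ⟩ := extraction_of_frequently_atTop hfreq
      have h1 : Tendsto (fun k => c (ψ k)) atTop (𝓝 (2 * L)) :=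
        hctend.comp hψmono.tendsto_atTop
      have h2 : ∀ k, c (ψ k) = 0 := fun k => intervalIntegral.integral_undef (hψ k)
      exact tendsto_nhds_unique (h1.congr h2) tendsto_const_nhds
    · rw [Filter.not_frequently] at hfreq
      simp only [not_not] at hfreq
      obtain ⟨N, hN⟩ := eventually_atTop.mp hfreq
      have hioc : ∀ s ∈ Ioc (0:ℝ) t, s ∈ Icc (0:ℝ) T :=
        fun s hs => ⟨hs.1.le, hs.2.trans ht.2⟩
      haveI : IsFiniteMeasure (volume.restrict (Ioc (0:ℝ) t)) :=
        ⟨by rw [Measure.restrict_apply_univ]; exact measure_Ioc_lt_top⟩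
      have hdct : Tendsto (fun n : ℕ => ∫ s in Ioc (0:ℝ) t, coagD K f (n + N) s ∂volume)
          atTop (𝓝 0) := by
        have h := tendsto_integral_of_dominated_convergence
          (μ := volume.restrict (Ioc (0:ℝ) t))
          (F := fun n s => coagD K f (n + N) s) (f := fun _ => (0:ℝ))
          (fun _ => 4 * C * C' * C')
          (fun n => ((hN (n + N) (Nat.le_add_left N n)).1).aestronglyMeasurable)
          (integrable_const _)
          (fun n => (ae_restrict_iff' measurableSet_Ioc).2 (ae_of_all _ fun s hs => by
            rw [Real.norm_eq_abs]
            exact (hkey s (hioc s hs)).1 (n + N)))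
          ((ae_restrict_iff' measurableSet_Ioc).2 (ae_of_all _ fun s hs =>
            (hkey s (hioc s hs)).2.comp (tendsto_add_atTop_nat N)))
        rwa [integral_zero] at h
      have hcN : Tendsto (fun n : ℕ => c (n + N)) atTop (𝓝 0) :=
        hdct.congr fun n => (intervalIntegral.integral_of_le ht0).symm
      have hcN' : Tendsto (fun n : ℕ => c (n + N)) atTop (𝓝 (2 * L)) :=
        hctend.comp (tendsto_add_atTop_nat N)
      exact tendsto_nhds_unique hcN' hcN
  have : L = 0 := by linarith
  rw [hLdef] at this
  linarith
end
end
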